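/- arXiv:2407.21472 — 9 statements merged into one kernel-verified Lean document; each statement's English description precedes it below -/
import Mathlib

section
/- Every graph G with no isolated vertex has a double coalition partition. -/
open SimpleGraph

variable {V : Type*}

/-- `D` is a double dominating set: every vertex has at least two vertices of its
closed neighborhood in `D`. -/
def DDom (G : SimpleGraph V) (D : Set V) : Prop :=
  ∀ v : V, 2 ≤ ((G.neighborSet v ∪ {v}) ∩ D).ncard

/-- `P` is a double coalition partition of `G`: a partition of the vertex set into
nonempty parts, none of which is a double dominating set, such that every part forms
a double coalition with some other part. -/
def IsDCPartition (G : SimpleGraph V) (P : Finset (Set V)) : Prop :=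
  (∀ A ∈ P, A.Nonempty) ∧
  (∀ A ∈ P, ∀ B ∈ P, A ≠ B → Disjoint A B) ∧
  (P.sup id = Set.univ) ∧
  (∀ A ∈ P, ¬ DDom G A) ∧
  (∀ A ∈ P, ∃ B ∈ P, B ≠ A ∧ DDom G (A ∪ B))

/-- The double coalition number: the maximum cardinality of a double coalition
partition (0 if none exists). -/
noncomputable def DC (G : SimpleGraph V) : ℕ :=
  sSup {k | ∃ P : Finset (Set V), IsDCPartition G P ∧ P.card = k}

/-- `P` is a double domatic partition: a partition of the vertex set into double
dominating sets. -/
def IsDDomaticPartition (G : SimpleGraph V) (P : Finset (Set V)) : Prop :=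
  (∀ A ∈ P, A.Nonempty) ∧
  (∀ A ∈ P, ∀ B ∈ P, A ≠ B → Disjoint A B) ∧
  (P.sup id = Set.univ) ∧
  (∀ A ∈ P, DDom G A)

/-- The double domatic number `d_{×2}(G)`. -/
noncomputable def doubleDomatic (G : SimpleGraph V) : ℕ :=
  sSup {k | ∃ P : Finset (Set V), IsDDomaticPartition G P ∧ P.card = k}

/-- The double domination number `γ_{×2}(G)`. -/
noncomputable def gamma2 (G : SimpleGraph V) : ℕ :=
  sInf {k | ∃ D : Set V, DDom G D ∧ D.ncard = k}

theorem stmt_2 {V : Type*} [Fintype V] (G : SimpleGraph V)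
    (h : ∀ v : V, ∃ u, G.Adj v u) :
    ∃ P : Finset (Set V), IsDCPartition G P := by
  classical
  rcases isEmpty_or_nonempty V with hV | hV
  · refine ⟨∅, ?_, ?_, ?_, ?_, ?_⟩ <;> simp
    exact (Set.univ_eq_empty_iff.2 hV).symm
  obtain ⟨w, -, hw⟩ := Finset.exists_min_image (Finset.univ : Finset V)
    (fun v => G.degree v) Finset.univ_nonempty
  obtain ⟨u, hu⟩ := h w
  have hwdeg : 1 ≤ G.degree w := (G.degree_pos_iff_exists_adj w).2 ⟨u, hu⟩
  set R : Set V := (G.neighborSet w)ᶜ with hR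
  have hwR : w ∈ R := by simp [hR]
  have hcard : ∀ v : V, (G.neighborSet v ∪ {v}).ncard = G.degree v + 1 := by
    intro v
    rw [Set.ncard_union_eq (by simp) (Set.toFinite _) (Set.toFinite _), Set.ncard_singleton]
    rw [Set.ncard_eq_toFinset_card', ← SimpleGraph.neighborFinset_def]
    rfl
  have hDD : ∀ x : V, G.Adj w x → DDom G ({x} ∪ R) := by
    intro x hx v
    have hset : ({x} : Set V) ∪ R = (G.neighborSet w \ {x})ᶜ := by
      ext y
      simp only [hR, Set.mem_union, Set.mem_singleton_iff, Set.mem_compl_iff, Set.mem_diff]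
      tauto
    rw [hset, ← Set.diff_eq]
    have h1 := Set.ncard_le_ncard_diff_add_ncard (G.neighborSet v ∪ {v})
      (G.neighborSet w \ {x}) (Set.toFinite _)
    rw [hcard v] at h1
    have hx' : x ∈ G.neighborSet w := hx
    have h2 : (G.neighborSet w \ {x}).ncard = G.degree w - 1 := by
      rw [Set.ncard_diff_singleton_of_mem hx']
      rw [Set.ncard_eq_toFinset_card', ← SimpleGraph.neighborFinset_def]
      rfl
    have h3 : G.degree w ≤ G.degree v := hw v (Finset.mem_univ _)
    omega
  have hsingNotDD : ∀ x : V, ¬ DDom G {x} := by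
    intro x hDx
    have := hDx x
    rw [Set.inter_eq_right.2 (by simp)] at this
    simp at this
  refine ⟨insert R ((G.neighborFinset w).image fun x => ({x} : Set V)), ?_, ?_, ?_, ?_, ?_⟩
  · intro A hA
    rcases Finset.mem_insert.1 hA with rfl | hA
    · exact ⟨w, hwR⟩
    · obtain ⟨x, -, rfl⟩ := Finset.mem_image.1 hA
      exact ⟨x, rfl⟩
  · intro A hA B hB hAB
    rcases Finset.mem_insert.1 hA with rfl | hA <;>
      rcases Finset.mem_insert.1 hB with rfl | hB
    · exact absurd rfl hAB
    · obtain ⟨x, hx, rfl⟩ := Finset.mem_image.1 hB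
      have : x ∈ G.neighborSet w := by simpa using hx
      simp [hR, Set.disjoint_singleton_right, this]
    · obtain ⟨x, hx, rfl⟩ := Finset.mem_image.1 hA
      have : x ∈ G.neighborSet w := by simpa using hx
      simp [hR, Set.disjoint_singleton_left, this]
    · obtain ⟨x, hx, rfl⟩ := Finset.mem_image.1 hA
      obtain ⟨y, hy, rfl⟩ := Finset.mem_image.1 hB
      have hxy : x ≠ y := fun e => hAB (by rw [e])
      simp [Set.disjoint_singleton_left, hxy]
  · apply Set.eq_univ_of_univ_subset
    intro x _
    by_cases hx : x ∈ G.neighborSet w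
    · have hmem : ({x} : Set V) ∈ insert R ((G.neighborFinset w).image fun x => ({x} : Set V)) := by
        refine Finset.mem_insert_of_mem (Finset.mem_image.2 ⟨x, ?_, rfl⟩)
        simpa using hx
      exact Finset.le_sup (f := id) hmem (Set.mem_singleton x)
    · have hmem : R ∈ insert R ((G.neighborFinset w).image fun x => ({x} : Set V)) :=
        Finset.mem_insert_self _ _
      exact Finset.le_sup (f := id) hmem hx
  · intro A hA
    rcases Finset.mem_insert.1 hA with rfl | hA
    · intro hDx
      have := hDx w
      have heq : (G.neighborSet w ∪ {w}) ∩ R = {w} := by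
        ext y
        simp only [hR, Set.mem_inter_iff, Set.mem_union, Set.mem_singleton_iff,
          Set.mem_compl_iff, SimpleGraph.mem_neighborSet]
        constructor
        · rintro ⟨hy | rfl, hy2⟩
          · exact absurd hy hy2
          · rfl
        · rintro rfl
          exact ⟨Or.inr rfl, fun hc => G.irrefl hc⟩
      rw [heq] at this
      simp at this
    · obtain ⟨x, -, rfl⟩ := Finset.mem_image.1 hA
      exact hsingNotDD x
  · intro A hA
    rcases Finset.mem_insert.1 hA with rfl | hA
    · refine ⟨{u}, Finset.mem_insert_of_mem (Finset.mem_image.2 ⟨u, by simpa using hu, rfl⟩),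
        ?_, ?_⟩
      · intro e
        have : u ∈ R := e ▸ Set.mem_singleton u
        exact this hu
      · rw [Set.union_comm]
        exact hDD u hu
    · obtain ⟨x, hx, rfl⟩ := Finset.mem_image.1 hA
      have hx' : G.Adj w x := by simpa using hx
      refine ⟨R, Finset.mem_insert_self _ _, ?_, ?_⟩
      · intro e
        have : w ∈ ({x} : Set V) := e ▸ hwR
        have : w = x := this
        exact G.irrefl (this ▸ hx')
      · exact hDD x hx'
end

section
/- If G is a graph with no isolated vertex, then DC(G) ≥ 2·d_{×2}(G), where d_{×2}(G) is the maximum number of parts in a partition of V(G) into double dominating sets. -/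
open SimpleGraph

variable {V : Type*}

lemma ddom_mono [Finite V] (G : SimpleGraph V) {A B : Set V} (hAB : A ⊆ B)
    (hA : DDom G A) : DDom G B := fun v =>
  le_trans (hA v) (Set.ncard_le_ncard (Set.inter_subset_inter_right _ hAB) (Set.toFinite _))

lemma not_ddom_singleton [Finite V] (G : SimpleGraph V) (v : V) :
    ¬ DDom G ({v} : Set V) := by
  intro hd
  have h1 : ((G.neighborSet v ∪ {v}) ∩ {v}).ncard ≤ ({v} : Set V).ncard :=
    Set.ncard_le_ncard (Set.inter_subset_right) (Set.toFinite _)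
  have h2 := le_trans (hd v) h1
  rw [Set.ncard_singleton] at h2
  omega

lemma ddom_two_le_ncard [Finite V] (G : SimpleGraph V) {D : Set V} (hD : DDom G D)
    (v : V) : 2 ≤ D.ncard :=
  le_trans (hD v) (Set.ncard_le_ncard (Set.inter_subset_right) (Set.toFinite _))

lemma split_lemma [Finite V] [Nonempty V] (G : SimpleGraph V) :
    ∀ n (D : Set V), D.ncard ≤ n → DDom G D →
    ∃ P : Finset (Set V),
      (∀ A ∈ P, A.Nonempty) ∧
      (∀ A ∈ P, ∀ B ∈ P, A ≠ B → Disjoint A B) ∧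
      P.sup id = D ∧
      (∀ A ∈ P, ¬ DDom G A) ∧
      (∀ A ∈ P, ∃ B ∈ P, B ≠ A ∧ DDom G (A ∪ B)) ∧
      2 ≤ P.card := by
  classical
  intro n
  induction n with
  | zero =>
    intro D hle hD
    have := ddom_two_le_ncard G hD (Classical.arbitrary V)
    omega
  | succ n ih =>
    intro D hle hD
    have hcard : 2 ≤ D.ncard := ddom_two_le_ncard G hD (Classical.arbitrary V)
    have hDne : D.Nonempty := by
      rw [← Set.ncard_pos (Set.toFinite _)]; omega
    obtain ⟨v, hv⟩ := hDne
    have hvsub : ({v} : Set V) ⊆ D := Set.singleton_subset_iff.2 hv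
    have hDdiff : ({v} : Set V) ∪ D \ {v} = D := Set.union_diff_cancel hvsub
    have hD'ne : (D \ {v}).Nonempty := by
      rw [← Set.ncard_pos (Set.toFinite _), Set.ncard_diff_singleton_of_mem hv]
      omega
    have hvnotin : v ∉ D \ {v} := by simp
    by_cases hD' : DDom G (D \ {v})
    · -- inductive case
      have hle' : (D \ {v}).ncard ≤ n := by
        rw [Set.ncard_diff_singleton_of_mem hv]; omega
      obtain ⟨P', h1, h2, h3, h4, h5, h6⟩ := ih (D \ {v}) hle' hD'
      have hsub : ∀ C ∈ P', C ⊆ D \ {v} := by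
        intro C hC
        have := Finset.le_sup (f := id) hC
        rw [h3] at this; exact this
      have hvC : ∀ C ∈ P', v ∉ C := fun C hC hvc => hvnotin (hsub C hC hvc)
      by_cases hex : ∃ A₀ ∈ P', ¬ DDom G (A₀ ∪ {v})
      · obtain ⟨A₀, hA₀P, hA₀n⟩ := hex
        refine ⟨insert (A₀ ∪ {v}) (P'.erase A₀), ?_, ?_, ?_, ?_, ?_, ?_⟩
        · intro A hA
          rcases Finset.mem_insert.1 hA with rfl | hA
          · exact ⟨v, Or.inr rfl⟩
          · exact h1 A (Finset.mem_of_mem_erase hA)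
        · intro A hA B hB hAB
          have key : ∀ C ∈ P'.erase A₀, Disjoint (A₀ ∪ {v}) C := by
            intro C hC
            have hCne : C ≠ A₀ := Finset.ne_of_mem_erase hC
            have hCP := Finset.mem_of_mem_erase hC
            refine Disjoint.union_left ?_ ?_
            · exact (h2 A₀ hA₀P C hCP hCne.symm)
            · exact Set.disjoint_singleton_left.2 (hvC C hCP)
          rcases Finset.mem_insert.1 hA with rfl | hA <;>
            rcases Finset.mem_insert.1 hB with rfl | hB
          · exact absurd rfl hAB
          · exact key B hB
          · exact (key A hA).symm
          · exact h2 A (Finset.mem_of_mem_erase hA) B (Finset.mem_of_mem_erase hB) hAB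
        · have hsup' : P'.sup id = A₀ ⊔ (P'.erase A₀).sup id := by
            conv_lhs => rw [← Finset.insert_erase hA₀P]
            rw [Finset.sup_insert]; rfl
          rw [Finset.sup_insert]
          show (A₀ ∪ {v}) ⊔ (P'.erase A₀).sup id = D
          have hassoc : (A₀ ∪ {v}) ⊔ (P'.erase A₀).sup id
              = ({v} : Set V) ∪ (A₀ ⊔ (P'.erase A₀).sup id) := by
            show (A₀ ∪ {v}) ∪ _ = {v} ∪ (A₀ ∪ _)
            rw [Set.union_comm A₀, Set.union_assoc]
          rw [hassoc, ← hsup', h3, hDdiff]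
        · intro A hA
          rcases Finset.mem_insert.1 hA with rfl | hA
          · exact hA₀n
          · exact h4 A (Finset.mem_of_mem_erase hA)
        · intro A hA
          have hAstar_ne : ∀ C ∈ P', A₀ ∪ {v} ≠ C := by
            intro C hC heq
            exact hvC C hC (heq ▸ Or.inr rfl)
          rcases Finset.mem_insert.1 hA with rfl | hA
          · obtain ⟨B, hBP, hBne, hBD⟩ := h5 A₀ hA₀P
            refine ⟨B, Finset.mem_insert_of_mem (Finset.mem_erase.2 ⟨hBne, hBP⟩), ?_, ?_⟩
            · exact fun heq => hAstar_ne B hBP heq.symm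
            · exact ddom_mono G (Set.union_subset_union_left _ Set.subset_union_left) hBD
          · have hAP := Finset.mem_of_mem_erase hA
            obtain ⟨B, hBP, hBne, hBD⟩ := h5 A hAP
            by_cases hBA : B = A₀
            · refine ⟨A₀ ∪ {v}, Finset.mem_insert_self _ _, (hAstar_ne A hAP), ?_⟩
              subst hBA
              refine ddom_mono G ?_ hBD
              rw [← Set.union_assoc]
              exact Set.subset_union_left
            · exact ⟨B, Finset.mem_insert_of_mem (Finset.mem_erase.2 ⟨hBA, hBP⟩), hBne, hBD⟩
        · have : A₀ ∪ {v} ∉ P'.erase A₀ := by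
            intro hmem
            exact hvC _ (Finset.mem_of_mem_erase hmem) (Or.inr rfl)
          rw [Finset.card_insert_of_notMem this, Finset.card_erase_of_mem hA₀P]
          omega
      · push_neg at hex
        have hvP' : ({v} : Set V) ∉ P' := fun hmem => hvC _ hmem rfl
        refine ⟨insert {v} P', ?_, ?_, ?_, ?_, ?_, ?_⟩
        · intro A hA
          rcases Finset.mem_insert.1 hA with rfl | hA
          · exact ⟨v, rfl⟩
          · exact h1 A hA
        · intro A hA B hB hAB
          rcases Finset.mem_insert.1 hA with rfl | hA <;>
            rcases Finset.mem_insert.1 hB with rfl | hB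
          · exact absurd rfl hAB
          · exact Set.disjoint_singleton_left.2 (hvC B hB)
          · exact (Set.disjoint_singleton_left.2 (hvC A hA)).symm
          · exact h2 A hA B hB hAB
        · rw [Finset.sup_insert, h3]; exact hDdiff
        · intro A hA
          rcases Finset.mem_insert.1 hA with rfl | hA
          · exact not_ddom_singleton G v
          · exact h4 A hA
        · intro A hA
          rcases Finset.mem_insert.1 hA with rfl | hA
          · have hP'ne : P'.Nonempty := Finset.card_pos.1 (by omega)
            obtain ⟨A₀, hA₀⟩ := hP'ne
            refine ⟨A₀, Finset.mem_insert_of_mem hA₀, ?_, ?_⟩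
            · intro heq; exact hvC A₀ hA₀ (heq ▸ rfl)
            · rw [Set.union_comm]; exact hex A₀ hA₀
          · obtain ⟨B, hBP, hBne, hBD⟩ := h5 A hA
            exact ⟨B, Finset.mem_insert_of_mem hBP, hBne, hBD⟩
        · rw [Finset.card_insert_of_notMem hvP']; omega
    · -- base split: {v} and D \ {v}
      have hne : ({v} : Set V) ≠ D \ {v} := by
        intro heq
        exact hvnotin (heq ▸ rfl)
      refine ⟨{({v} : Set V), D \ {v}}, ?_, ?_, ?_, ?_, ?_, ?_⟩
      · intro A hA
        rcases Finset.mem_insert.1 hA with rfl | hA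
        · exact ⟨v, rfl⟩
        · rw [Finset.mem_singleton.1 hA]; exact hD'ne
      · intro A hA B hB hAB
        rcases Finset.mem_insert.1 hA with rfl | hA <;>
          rcases Finset.mem_insert.1 hB with rfl | hB
        · exact absurd rfl hAB
        · rw [Finset.mem_singleton.1 hB]
          exact Set.disjoint_singleton_left.2 hvnotin
        · rw [Finset.mem_singleton.1 hA]
          exact (Set.disjoint_singleton_left.2 hvnotin).symm
        · rw [Finset.mem_singleton.1 hA, Finset.mem_singleton.1 hB] at hAB
          exact absurd rfl hAB
      · rw [Finset.sup_insert, Finset.sup_singleton]; exact hDdiff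
      · intro A hA
        rcases Finset.mem_insert.1 hA with rfl | hA
        · exact not_ddom_singleton G v
        · rw [Finset.mem_singleton.1 hA]; exact hD'
      · intro A hA
        rcases Finset.mem_insert.1 hA with rfl | hA
        · refine ⟨D \ {v}, by simp, hne.symm, ?_⟩
          rw [hDdiff]; exact hD
        · rw [Finset.mem_singleton.1 hA]
          refine ⟨{v}, by simp, hne, ?_⟩
          rw [Set.union_comm, hDdiff]; exact hD
      · rw [Finset.card_insert_of_notMem (by simpa using hne), Finset.card_singleton]

theorem stmt_3 {V : Type*} [Fintype V] (G : SimpleGraph V)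
    (h : ∀ v : V, ∃ u, G.Adj v u) :
    2 * doubleDomatic G ≤ DC G := by
  classical
  haveI : Fintype (Set V) := Fintype.ofFinite _
  -- bounded above
  have hbddDC : BddAbove {k | ∃ P : Finset (Set V), IsDCPartition G P ∧ P.card = k} := by
    refine ⟨Fintype.card (Set V), ?_⟩
    rintro m ⟨P, _, rfl⟩
    exact Finset.card_le_univ P
  have hbddDD : BddAbove {k | ∃ P : Finset (Set V), IsDDomaticPartition G P ∧ P.card = k} := by
    refine ⟨Fintype.card (Set V), ?_⟩
    rintro m ⟨P, _, rfl⟩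
    exact Finset.card_le_univ P
  -- main claim
  have main : ∀ m ∈ {k | ∃ P : Finset (Set V), IsDDomaticPartition G P ∧ P.card = k},
      2 * m ≤ DC G := by
    rintro m ⟨P, ⟨hP1, hP2, hP3, hP4⟩, rfl⟩
    rcases P.eq_empty_or_nonempty with rfl | hPne
    · simp
    · -- V is nonempty
      obtain ⟨A₁, hA₁⟩ := hPne
      obtain ⟨x, hx⟩ := hP1 A₁ hA₁
      haveI : Nonempty V := ⟨x⟩
      have key : ∀ A : Set V, ∃ Q : Finset (Set V), A ∈ P →
          (∀ X ∈ Q, X.Nonempty) ∧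
          (∀ X ∈ Q, ∀ Y ∈ Q, X ≠ Y → Disjoint X Y) ∧
          Q.sup id = A ∧
          (∀ X ∈ Q, ¬ DDom G X) ∧
          (∀ X ∈ Q, ∃ Y ∈ Q, Y ≠ X ∧ DDom G (X ∪ Y)) ∧
          2 ≤ Q.card := by
        intro A
        by_cases hA : A ∈ P
        · obtain ⟨Q, hQ⟩ := split_lemma G A.ncard A le_rfl (hP4 A hA)
          exact ⟨Q, fun _ => hQ⟩
        · exact ⟨∅, fun hmem => absurd hmem hA⟩
      choose f hf using key
      have hfsub : ∀ A ∈ P, ∀ X ∈ f A, X ⊆ A := by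
        intro A hA X hX
        have := Finset.le_sup (f := id) hX
        rw [(hf A hA).2.2.1] at this
        exact this
      set R : Finset (Set V) := P.biUnion f with hR
      have hdisjf : ∀ A ∈ P, ∀ B ∈ P, A ≠ B → Disjoint (f A) (f B) := by
        intro A hA B hB hAB
        rw [Finset.disjoint_left]
        intro X hXA hXB
        have hXne := (hf A hA).1 X hXA
        have := Set.disjoint_iff_inter_eq_empty.1 ((hP2 A hA B hB hAB))
        obtain ⟨y, hy⟩ := hXne
        have : y ∈ A ∩ B := ⟨hfsub A hA X hXA hy, hfsub B hB X hXB hy⟩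
        rw [‹A ∩ B = ∅›] at this
        exact this
      have hRcard : 2 * P.card ≤ R.card := by
        rw [hR, Finset.card_biUnion hdisjf]
        calc 2 * P.card = ∑ _A ∈ P, 2 := by rw [Finset.sum_const, smul_eq_mul, mul_comm]
        _ ≤ ∑ A ∈ P, (f A).card := Finset.sum_le_sum fun A hA => (hf A hA).2.2.2.2.2
      have hRdc : IsDCPartition G R := by
        refine ⟨?_, ?_, ?_, ?_, ?_⟩
        · intro X hX
          obtain ⟨A, hA, hXA⟩ := Finset.mem_biUnion.1 hX
          exact (hf A hA).1 X hXA
        · intro X hX Y hY hXY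
          obtain ⟨A, hA, hXA⟩ := Finset.mem_biUnion.1 hX
          obtain ⟨B, hB, hYB⟩ := Finset.mem_biUnion.1 hY
          by_cases hAB : A = B
          · subst hAB
            exact (hf A hA).2.1 X hXA Y hYB hXY
          · exact Set.disjoint_of_subset (hfsub A hA X hXA) (hfsub B hB Y hYB)
              (hP2 A hA B hB hAB)
        · rw [hR, Finset.sup_biUnion]
          rw [← hP3]
          exact Finset.sup_congr rfl fun A hA => (hf A hA).2.2.1
        · intro X hX
          obtain ⟨A, hA, hXA⟩ := Finset.mem_biUnion.1 hX
          exact (hf A hA).2.2.2.1 X hXA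
        · intro X hX
          obtain ⟨A, hA, hXA⟩ := Finset.mem_biUnion.1 hX
          obtain ⟨Y, hY, hYne, hYD⟩ := (hf A hA).2.2.2.2.1 X hXA
          exact ⟨Y, Finset.mem_biUnion.2 ⟨A, hA, hY⟩, hYne, hYD⟩
      calc 2 * P.card ≤ R.card := hRcard
      _ ≤ DC G := le_csSup hbddDC ⟨R, hRdc, rfl⟩
  rcases Set.eq_empty_or_nonempty
      {k | ∃ P : Finset (Set V), IsDDomaticPartition G P ∧ P.card = k} with he | hne
  · rw [doubleDomatic, he]
    simp
  · exact main _ (Nat.sSup_mem hne hbddDD)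
end

section
/- For the complete graph K_n with n ≥ 2, DC(K_n) = n; in particular the partition of the vertex set into n singletons is a double coalition partition. -/
open SimpleGraph

variable {V : Type*}

lemma ddom_top_iff {n : ℕ} (hn : 1 ≤ n) (D : Set (Fin n)) :
    DDom (⊤ : SimpleGraph (Fin n)) D ↔ 2 ≤ D.ncard := by
  have hkey : ∀ v : Fin n, ((⊤ : SimpleGraph (Fin n)).neighborSet v ∪ {v}) = Set.univ := by
    intro v
    ext w
    simp [SimpleGraph.neighborSet, eq_comm, or_comm, em]
  constructor
  · intro h
    obtain ⟨v⟩ : Nonempty (Fin n) := ⟨⟨0, hn⟩⟩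
    have := h v
    rwa [hkey v, Set.univ_inter] at this
  · intro h v
    rwa [hkey v, Set.univ_inter]

open scoped Classical in
theorem stmt_5 (n : ℕ) (hn : 2 ≤ n) :
    DC (⊤ : SimpleGraph (Fin n)) = n ∧
    IsDCPartition (⊤ : SimpleGraph (Fin n))
      ((Finset.univ : Finset (Fin n)).image (fun v => ({v} : Set (Fin n))))  := by
  set P := ((Finset.univ : Finset (Fin n)).image (fun v => ({v} : Set (Fin n))))
  have hn1 : 1 ≤ n := le_trans (by norm_num) hn
  have hinj : Function.Injective (fun v : Fin n => ({v} : Set (Fin n))) := by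
    intro a b h; simpa using h
  have hcard : P.card = n := by
    rw [Finset.card_image_of_injective _ hinj, Finset.card_univ, Fintype.card_fin]
  have hP : IsDCPartition (⊤ : SimpleGraph (Fin n)) P := by
    refine ⟨?_, ?_, ?_, ?_, ?_⟩
    · intro A hA
      simp only [P, Finset.mem_image] at hA
      obtain ⟨v, -, rfl⟩ := hA
      exact ⟨v, rfl⟩
    · intro A hA B hB hAB
      simp only [P, Finset.mem_image] at hA hB
      obtain ⟨v, -, rfl⟩ := hA
      obtain ⟨w, -, rfl⟩ := hB
      have : v ≠ w := fun h => hAB (by rw [h])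
      simp [Set.disjoint_singleton_left, this]
    · apply Set.eq_univ_of_univ_subset
      intro v _
      have h1 : ({v} : Set (Fin n)) ∈ P := Finset.mem_image_of_mem _ (Finset.mem_univ v)
      exact Finset.le_sup (f := id) h1 rfl
    · intro A hA
      simp only [P, Finset.mem_image] at hA
      obtain ⟨v, -, rfl⟩ := hA
      rw [ddom_top_iff hn1]
      simp
    · intro A hA
      simp only [P, Finset.mem_image] at hA
      obtain ⟨v, -, rfl⟩ := hA
      obtain ⟨w, hw⟩ : ∃ w : Fin n, w ≠ v := by
        have : 1 < Fintype.card (Fin n) := by rw [Fintype.card_fin]; omega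
        exact Fintype.exists_ne_of_one_lt_card this v
      refine ⟨{w}, Finset.mem_image_of_mem _ (Finset.mem_univ w), ?_, ?_⟩
      · intro h
        exact hw (by simpa using h)
      · rw [ddom_top_iff hn1]
        rw [Set.ncard_union_eq (by simp [hw.symm])]
        simp
  have hub : ∀ k ∈ {k | ∃ Q : Finset (Set (Fin n)), IsDCPartition (⊤ : SimpleGraph (Fin n)) Q ∧ Q.card = k}, k ≤ n := by
    rintro k ⟨Q, ⟨hne, hdisj, -, -, -⟩, rfl⟩
    classical
    have : ∀ A ∈ Q, ∃ v : Fin n, v ∈ A := fun A hA => hne A hA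
    choose f hf using this
    have : Q.card = (Q.attach.image (fun A => f A.1 A.2)).card := by
      rw [Finset.card_image_of_injective _ ?_, Finset.card_attach]
      intro ⟨A, hA⟩ ⟨B, hB⟩ h
      simp only at h
      by_contra hne'
      have hAB : A ≠ B := fun h' => hne' (Subtype.ext h')
      exact (hdisj A hA B hB hAB).ne_of_mem (hf A hA) (hf B hB) h
    rw [this]
    calc (Q.attach.image (fun A => f A.1 A.2)).card ≤ (Finset.univ : Finset (Fin n)).card :=
          Finset.card_le_card (Finset.subset_univ _)
      _ = n := by simp
  have hmem : n ∈ {k | ∃ Q : Finset (Set (Fin n)), IsDCPartition (⊤ : SimpleGraph (Fin n)) Q ∧ Q.card = k} :=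
    ⟨P, hP, hcard⟩
  refine ⟨le_antisymm (csSup_le ⟨n, hmem⟩ hub) (le_csSup ⟨n, hub⟩ hmem), hP⟩
end

section
/- Let G be an isolate-free graph with maximum degree Δ(G). For any double coalition partition Π of G of maximum size and any X ∈ Π, the number of sets of Π forming a double coalition with X is at most Δ(G). -/
open SimpleGraph

variable {V : Type*}

/-- Auxiliary: if the sets in `S` are pairwise disjoint and each meets `T`,
then there are at most `T.ncard` of them. -/
lemma aux_card {V : Type*} [Finite V] {S : Set (Set V)} {T : Set V}
    (hdisj : S.Pairwise Disjoint)
    (hmeet : ∀ B ∈ S, (B ∩ T).Nonempty) : S.ncard ≤ T.ncard := by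
  classical
  rcases S.eq_empty_or_nonempty with hSe | ⟨B0, hB0⟩
  · simp [hSe]
  obtain ⟨v0, -⟩ := hmeet B0 hB0
  set f : Set V → V := fun B => if h : (B ∩ T).Nonempty then h.choose else v0 with hf
  have hft : ∀ B ∈ S, f B ∈ B ∩ T := by
    intro B hB
    have h := hmeet B hB
    simp only [hf, dif_pos h]
    exact h.choose_spec
  apply Set.ncard_le_ncard_of_injOn f (fun B hB => (hft B hB).2) ?_ (Set.toFinite T)
  intro B1 h1 B2 h2 hfe
  by_contra hne
  have := (hdisj h1 h2 hne).ne_of_mem (hft B1 h1).1 ((hfe ▸ (hft B2 h2).1))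
  exact this rfl

theorem stmt_6 {V : Type*} [Fintype V] (G : SimpleGraph V) [DecidableRel G.Adj]
    (h : ∀ v : V, ∃ u, G.Adj v u)
    (P : Finset (Set V)) (hP : IsDCPartition G P) (hmax : P.card = DC G)
    (X : Set V) (hX : X ∈ P) :
    {B ∈ (P : Set (Set V)) | B ≠ X ∧ DDom G (X ∪ B)}.ncard ≤ G.maxDegree := by
  classical
  obtain ⟨hne, hdisj, hcov, hnd, hco⟩ := hP
  have hX' := hnd X hX
  simp only [DDom, not_forall, not_le] at hX'
  obtain ⟨v, hv⟩ := hX'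
  set Nv := G.neighborSet v ∪ {v} with hNvdef
  set S := {B ∈ (P : Set (Set V)) | B ≠ X ∧ DDom G (X ∪ B)} with hSdef
  have hSmem : ∀ B ∈ S, B ∈ P ∧ B ≠ X ∧ DDom G (X ∪ B) := fun B hB => hB
  have hSdisj : S.Pairwise Disjoint := by
    intro B1 h1 B2 h2 hne'
    exact hdisj B1 (hSmem B1 h1).1 B2 (hSmem B2 h2).1 hne'
  have hNS : (G.neighborSet v).ncard = G.degree v := by
    simp [SimpleGraph.degree, ← Set.ncard_coe_finset, SimpleGraph.neighborFinset_def]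
  have hNv : Nv.ncard = G.degree v + 1 := by
    rw [hNvdef, Set.ncard_union_eq (by simp [Set.disjoint_singleton_right])
      (Set.toFinite _) (Set.toFinite _), hNS, Set.ncard_singleton]
  have hBsplit : ∀ B ∈ S, 2 ≤ (Nv ∩ X).ncard + (Nv ∩ B).ncard := by
    intro B hB
    have hdd := (hSmem B hB).2.2 v
    calc 2 ≤ (Nv ∩ (X ∪ B)).ncard := hdd
      _ = ((Nv ∩ X) ∪ (Nv ∩ B)).ncard := by rw [Set.inter_union_distrib_left]
      _ ≤ (Nv ∩ X).ncard + (Nv ∩ B).ncard := Set.ncard_union_le _ _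
  have hdeg : G.degree v ≤ G.maxDegree := G.degree_le_maxDegree v
  rcases Nat.eq_zero_or_pos (Nv ∩ X).ncard with hc0 | hc1
  · -- case: N[v] misses X entirely; each partner contains two elts of N[v], hence a neighbor
    have hmeet : ∀ B ∈ S, (B ∩ G.neighborSet v).Nonempty := by
      intro B hB
      have h2 : 2 ≤ (Nv ∩ B).ncard := by have := hBsplit B hB; omega
      obtain ⟨w, hw, hwv⟩ := Set.exists_ne_of_one_lt_ncard (s := Nv ∩ B) (by omega) v
      refine ⟨w, hw.2, ?_⟩
      rcases hw.1 with hw' | hw'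
      · exact hw'
      · exact absurd hw' hwv
    calc S.ncard ≤ (G.neighborSet v).ncard := aux_card hSdisj hmeet
      _ = G.degree v := hNS
      _ ≤ G.maxDegree := hdeg
  · -- case: N[v] meets X in exactly one vertex
    have hcle : (Nv ∩ X).ncard = 1 := by omega
    have hTcard : (Nv \ X).ncard = G.degree v := by
      rw [← Set.diff_self_inter, Set.ncard_diff Set.inter_subset_left (Set.toFinite _),
        hNv, hcle]
      omega
    have hmeet : ∀ B ∈ S, (B ∩ (Nv \ X)).Nonempty := by
      intro B hB
      have h1 : 1 ≤ (Nv ∩ B).ncard := by have := hBsplit B hB; omega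
      obtain ⟨w, hw⟩ := Set.nonempty_of_ncard_ne_zero (s := Nv ∩ B) (by omega)
      have hdXB : Disjoint X B := hdisj X hX B (hSmem B hB).1 (Ne.symm (hSmem B hB).2.1)
      exact ⟨w, hw.2, hw.1, fun hwX => (hdXB.ne_of_mem hwX hw.2) rfl⟩
    calc S.ncard ≤ (Nv \ X).ncard := aux_card hSdisj hmeet
      _ = G.degree v := hTcard
      _ ≤ G.maxDegree := hdeg
end

section
/- If G is an isolate-free graph with minimum degree δ(G) = 1, then DC(G) ≤ Δ(G) + 1. -/
open SimpleGraph

variable {V : Type*}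

theorem stmt_8 {V : Type*} [Fintype V] (G : SimpleGraph V) [DecidableRel G.Adj]
    (h : ∀ v : V, ∃ u, G.Adj v u) (hδ : G.minDegree = 1) :
    DC G ≤ G.maxDegree + 1 := by
  classical
  refine csSup_le' ?_
  rintro k ⟨P, hP, rfl⟩
  obtain ⟨hne, hdisj, hcover, hndd, hco⟩ := hP
  have part_eq : ∀ {A B : Set V} {x : V}, A ∈ P → B ∈ P → x ∈ A → x ∈ B → A = B := by
    intro A B x hA hB hxA hxB
    by_contra hAB
    exact (hdisj A hA B hB hAB).ne_of_mem hxA hxB rfl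
  have mem_part : ∀ x : V, ∃ A ∈ P, x ∈ A := by
    intro x
    have hx : x ∈ P.sup id := by rw [hcover]; exact Set.mem_univ x
    rw [Finset.sup_set_eq_biUnion] at hx
    simpa using hx
  cases isEmpty_or_nonempty V with
  | inl hV =>
    have hPe : P = ∅ := Finset.eq_empty_of_forall_notMem fun A hA => by
      obtain ⟨x, _⟩ := hne A hA; exact hV.false x
    simp [hPe]
  | inr hV =>
    obtain ⟨v, hv⟩ := G.exists_minimal_degree_vertex
    rw [hδ] at hv
    have hcard1 : (G.neighborFinset v).card = 1 := hv.symm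
    obtain ⟨u, hu⟩ := Finset.card_eq_one.mp hcard1
    have huv : G.Adj v u := by
      have : u ∈ G.neighborFinset v := by simp [hu]
      exact (SimpleGraph.mem_neighborFinset G v u).mp this
    have huvne : u ≠ v := (G.ne_of_adj huv).symm
    have hNv : G.neighborSet v = {u} := by
      ext x
      simp [← SimpleGraph.mem_neighborFinset, hu]
    have key : ∀ D : Set V, DDom G D → v ∈ D ∧ u ∈ D := by
      intro D hD
      have h2 := hD v
      rw [hNv] at h2
      have hsub : ({u} ∪ {v} : Set V) ∩ D ⊆ ({u} ∪ {v} : Set V) := Set.inter_subset_left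
      have hcard2 : (({u} ∪ {v} : Set V)).ncard = 2 := by
        rw [Set.singleton_union]
        exact Set.ncard_pair huvne
      have heq := Set.eq_of_subset_of_ncard_le hsub (by rw [hcard2]; exact h2) (Set.toFinite _)
      have hDsub : ({u} ∪ {v} : Set V) ⊆ D := by
        rw [← heq]; exact Set.inter_subset_right
      exact ⟨hDsub (by simp), hDsub (by simp)⟩
    obtain ⟨X, hX, hvX⟩ := mem_part v
    obtain ⟨Y, hY, huY⟩ := mem_part u
    by_cases hXY : X = Y
    · -- v and u in the same part X
      have huX : u ∈ X := by rw [hXY]; exact huY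
      have hnd := hndd X hX
      rw [DDom] at hnd
      push_neg at hnd
      obtain ⟨w, hw⟩ := hnd
      set M : Set V := G.neighborSet w ∪ {w} with hM
      have hMfin : M.Finite := Set.toFinite _
      have hMcard : M.ncard = G.degree w + 1 := by
        rw [hM, Set.union_singleton,
          Set.ncard_insert_of_notMem (G.notMem_neighborSet_self)]
        congr 1
        rw [Set.ncard_eq_toFinset_card', Set.toFinset_card]
        convert G.card_neighborSet_eq_degree w
      have hdegw : 1 ≤ G.degree w := (G.degree_pos_iff_exists_adj w).mpr (h w)
      have hdegΔ : G.degree w ≤ G.maxDegree := G.degree_le_maxDegree w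
      have hkey : ∀ A ∈ P, A ≠ X → 2 ≤ (M ∩ A).ncard + (M ∩ X).ncard := by
        intro A hA hAX
        obtain ⟨B, hB, hBA, hDD⟩ := hco A hA
        have hvB : v ∈ B :=
          (key _ hDD).1.resolve_left fun hvA => hAX (part_eq hA hX hvA hvX)
        have hBX : B = X := part_eq hB hX hvB hvX
        rw [hBX] at hDD
        have h2 : 2 ≤ (M ∩ (A ∪ X)).ncard := hDD w
        have hdist : M ∩ (A ∪ X) = (M ∩ A) ∪ (M ∩ X) := Set.inter_union_distrib_left M A X
        calc 2 ≤ ((M ∩ A) ∪ (M ∩ X)).ncard := by rw [← hdist]; exact h2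
          _ ≤ (M ∩ A).ncard + (M ∩ X).ncard := Set.ncard_union_le _ _
      by_cases hc0 : (M ∩ X).ncard = 0
      · -- X misses N[w] entirely: every other part takes two elements of N[w]
        have h2A : ∀ A ∈ P.erase X, 2 ≤ (M ∩ A).ncard := by
          intro A hA
          have := hkey A (Finset.mem_of_mem_erase hA) (Finset.ne_of_mem_erase hA)
          omega
        set g : Set V → Finset V := fun A => (Set.toFinite (M ∩ A)).toFinset with hg
        have hgsub : ∀ A, g A ⊆ hMfin.toFinset := by
          intro A x hx
          rw [Set.Finite.mem_toFinset] at *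
          exact hx.1
        have hbi : ((P.erase X).biUnion g) ⊆ hMfin.toFinset :=
          Finset.biUnion_subset.mpr fun A _ => hgsub A
        have hcards : ∑ A ∈ P.erase X, (g A).card = ((P.erase X).biUnion g).card := by
          refine (Finset.card_biUnion ?_).symm
          intro A hA B hB hAB
          have hD := hdisj A (Finset.mem_of_mem_erase hA) B (Finset.mem_of_mem_erase hB) hAB
          rw [Function.onFun, Finset.disjoint_left]
          intro x hxA hxB
          rw [Set.Finite.mem_toFinset] at hxA hxB
          exact (hD.ne_of_mem hxA.2 hxB.2) rfl
        have hlow : (P.erase X).card * 2 ≤ ∑ A ∈ P.erase X, (g A).card := by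
          have := Finset.card_nsmul_le_sum (P.erase X) (fun A => (g A).card) 2
            (fun A hA => by
              have := h2A A hA
              rwa [Set.ncard_eq_toFinset_card _ (Set.toFinite (M ∩ A))] at this)
          simpa [smul_eq_mul] using this
        have hup : ((P.erase X).biUnion g).card ≤ G.degree w + 1 := by
          have := Finset.card_le_card hbi
          rwa [← Set.ncard_eq_toFinset_card _ hMfin, hMcard] at this
        have herase : (P.erase X).card = P.card - 1 := Finset.card_erase_of_mem hX
        have hPpos : 1 ≤ P.card := Finset.card_pos.mpr ⟨X, hX⟩
        omega
      · -- X meets N[w]: every part meets N[w]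
        have hAne : ∀ A ∈ P, (M ∩ A).Nonempty := by
          intro A hA
          by_cases hAX : A = X
          · subst hAX
            exact Set.nonempty_of_ncard_ne_zero hc0
          · have := hkey A hA hAX
            have hle : (M ∩ X).ncard ≤ 1 := by omega
            have : 1 ≤ (M ∩ A).ncard := by omega
            exact Set.nonempty_of_ncard_ne_zero (by omega)
        have hf : ∀ A : Set V, ∃ x, A ∈ P → x ∈ M ∩ A := by
          intro A
          by_cases hA : A ∈ P
          · obtain ⟨x, hx⟩ := hAne A hA
            exact ⟨x, fun _ => hx⟩
          · exact ⟨Classical.arbitrary V, fun hc => absurd hc hA⟩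
        choose f hfmem using hf
        have hle : P.card ≤ hMfin.toFinset.card := by
          refine Finset.card_le_card_of_injOn f ?_ ?_
          · intro A hA
            rw [Finset.mem_coe, Set.Finite.mem_toFinset]
            exact (hfmem A hA).1
          · intro A hA B hB hfe
            exact part_eq hA hB (hfmem A hA).2 (hfe ▸ (hfmem B hB).2)
        rw [← Set.ncard_eq_toFinset_card _ hMfin, hMcard] at hle
        omega
    · -- v and u in different parts: P = {X, Y}
      have hsub : P ⊆ {X, Y} := by
        intro A hA
        simp only [Finset.mem_insert, Finset.mem_singleton]
        by_contra hAXY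
        push_neg at hAXY
        obtain ⟨B, hB, hBA, hDD⟩ := hco A hA
        obtain ⟨hvAB, huAB⟩ := key _ hDD
        have hvB : v ∈ B := hvAB.resolve_left fun hvA => hAXY.1 (part_eq hA hX hvA hvX)
        have huB : u ∈ B := huAB.resolve_left fun huA => hAXY.2 (part_eq hA hY huA huY)
        exact hXY ((part_eq hB hX hvB hvX).symm.trans (part_eq hB hY huB huY))
      have h2 : P.card ≤ 2 := by
        calc P.card ≤ ({X, Y} : Finset (Set V)).card := Finset.card_le_card hsub
          _ ≤ 2 := Finset.card_insert_le _ _ |>.trans (by simp)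
      have hΔ : 1 ≤ G.maxDegree := hv ▸ G.degree_le_maxDegree v
      omega
end

section
/- If T is a tree of order n ≥ 2, then DC(T) ≤ Δ(T) + 1. -/
open SimpleGraph

variable {V : Type*}

lemma exists_leaf {V : Type*} [Fintype V] (G : SimpleGraph V) [DecidableRel G.Adj]
    (hT : G.IsTree) (h2 : 2 ≤ Fintype.card V) : ∃ v, G.degree v = 1 := by
  by_contra h
  push_neg at h
  have hdeg : ∀ v : V, 2 ≤ G.degree v := by
    intro v
    have hpos : 0 < G.degree v := by
      rw [G.degree_pos_iff_exists_adj]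
      have : Nontrivial V := Fintype.one_lt_card_iff_nontrivial.mp (by omega)
      obtain ⟨w, hw⟩ := exists_ne v
      obtain ⟨p⟩ := hT.isConnected.preconnected v w
      exact ⟨p.getVert 1, p.adj_snd (SimpleGraph.Walk.not_nil_of_ne (Ne.symm hw))⟩
    have := h v
    omega
  have hsum : ∑ v : V, G.degree v = 2 * G.edgeFinset.card :=
    G.sum_degrees_eq_twice_card_edges
  have hcard : G.edgeFinset.card + 1 = Fintype.card V := hT.card_edgeFinset
  have : 2 * Fintype.card V ≤ ∑ v : V, G.degree v := by
    calc 2 * Fintype.card V = ∑ _v : V, 2 := by simp [mul_comm]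
    _ ≤ ∑ v : V, G.degree v := Finset.sum_le_sum fun v _ => hdeg v
  omega

lemma ddom_mem {V : Type*} [Fintype V] (G : SimpleGraph V) [DecidableRel G.Adj]
    {v u : V} (hN : G.neighborFinset v = {u}) {D : Set V} (hD : DDom G D) :
    v ∈ D ∧ u ∈ D := by
  have hvu : v ≠ u := by
    intro h; subst h
    have hv : v ∈ G.neighborFinset v := by rw [hN]; exact Finset.mem_singleton_self _
    rw [SimpleGraph.mem_neighborFinset] at hv
    exact G.irrefl hv
  have hNv : G.neighborSet v ∪ {v} = {u, v} := by
    have : G.neighborSet v = {u} := by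
      ext x
      simp only [SimpleGraph.mem_neighborSet, ← SimpleGraph.mem_neighborFinset, hN,
        Finset.mem_singleton, Set.mem_singleton_iff]
    rw [this]; ext x; simp [Set.mem_union, or_comm]
  have h2 := hD v
  rw [hNv] at h2
  constructor
  · by_contra hv
    have hsub : ({u, v} : Set V) ∩ D ⊆ {u} := by
      intro x hx
      rcases hx with ⟨hx1, hx2⟩
      rcases hx1 with h | h
      · exact h
      · exact absurd (h ▸ hx2) hv
    have := Set.ncard_le_ncard hsub (Set.finite_singleton u)
    rw [Set.ncard_singleton] at this
    omega
  · by_contra hu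
    have hsub : ({u, v} : Set V) ∩ D ⊆ {v} := by
      intro x hx
      rcases hx with ⟨hx1, hx2⟩
      rcases hx1 with h | h
      · exact absurd (h ▸ hx2) hu
      · exact h
    have := Set.ncard_le_ncard hsub (Set.finite_singleton v)
    rw [Set.ncard_singleton] at this
    omega

theorem stmt_9 {V : Type*} [Fintype V] (G : SimpleGraph V) [DecidableRel G.Adj]
    (hT : G.IsTree) (n : ℕ) (hn : Fintype.card V = n) (h2 : 2 ≤ n) :
    DC G ≤ G.maxDegree + 1 := by
  classical
  refine csSup_le' ?_
  rintro k ⟨P, ⟨hne, hdisj, hcover, hnd, hco⟩, rfl⟩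
  obtain ⟨v, hv⟩ := exists_leaf G hT (hn ▸ h2)
  obtain ⟨u, hu⟩ := Finset.card_eq_one.mp (by rwa [← SimpleGraph.card_neighborFinset_eq_degree] at hv)
  have hmem : ∀ x : V, ∃ A ∈ P, x ∈ A := by
    intro x
    have : x ∈ P.sup id := hcover ▸ Set.mem_univ x
    rw [Finset.sup_set_eq_biUnion] at this
    simpa using this
  have huniq : ∀ x : V, ∀ A ∈ P, ∀ B ∈ P, x ∈ A → x ∈ B → A = B := by
    intro x A hA B hB hxA hxB
    by_contra hAB
    exact Set.disjoint_left.mp (hdisj A hA B hB hAB) hxA hxB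
  obtain ⟨Av, hAvP, hvAv⟩ := hmem v
  obtain ⟨Au, hAuP, huAu⟩ := hmem u
  have hΔ : 1 ≤ G.maxDegree := hv ▸ G.degree_le_maxDegree v
  by_cases hC : Av = Au
  · -- every other part pairs with C := Av
    have hpair : ∀ A ∈ P, A ≠ Av → DDom G (A ∪ Av) := by
      intro A hA hAne
      obtain ⟨B, hB, hBA, hDB⟩ := hco A hA
      obtain ⟨hvm, -⟩ := ddom_mem G hu hDB
      have hBeq : B = Av := by
        rcases hvm with h | h
        · exact absurd (huniq v A hA Av hAvP h hvAv) hAne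
        · exact huniq v B hB Av hAvP h hvAv
      rwa [hBeq] at hDB
    -- C is not DDom: get a poorly dominated vertex w
    have : ¬ DDom G Av := hnd Av hAvP
    rw [DDom] at this; push_neg at this
    obtain ⟨w, hw⟩ := this
    set S : Set V := G.neighborSet w ∪ {w} with hS
    have hSfin : S.Finite := Set.toFinite _
    have hScard : S.ncard = G.degree w + 1 := by
      have hd0 : Disjoint (G.neighborSet w) ({w} : Set V) := by
        simp [Set.disjoint_singleton_right]
      have hns : (G.neighborSet w).ncard = G.degree w := by
        rw [Set.ncard_eq_toFinset_card', ← SimpleGraph.card_neighborFinset_eq_degree]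
        congr 1
      rw [hS, Set.ncard_union_eq hd0 (Set.toFinite _) (Set.toFinite _), Set.ncard_singleton, hns]
    set c := (S ∩ Av).ncard with hc
    have hc1 : c ≤ 1 := by omega
    -- key inequality per part
    have key : ∀ A ∈ P, A ≠ Av → 2 ≤ (S ∩ A).ncard + c := by
      intro A hA hAne
      have := hpair A hA hAne w
      calc 2 ≤ (S ∩ (A ∪ Av)).ncard := this
        _ = ((S ∩ A) ∪ (S ∩ Av)).ncard := by rw [Set.inter_union_distrib_left]
        _ ≤ (S ∩ A).ncard + (S ∩ Av).ncard := Set.ncard_union_le _ _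
    -- counting
    have hsum : ∑ A ∈ P.erase Av, (S ∩ A).ncard ≤ S.ncard - c := by
      have hre : ∀ A ∈ P.erase Av, (S ∩ A).toFinset ⊆ (S \ Av).toFinset := by
        intro A hA
        obtain ⟨hAne, hAP⟩ := Finset.mem_erase.mp hA
        intro x hx
        rw [Set.mem_toFinset] at hx ⊢
        exact ⟨hx.1, Set.disjoint_left.mp (hdisj A hAP Av hAvP hAne) hx.2⟩
      have hdisj2 : (P.erase Av : Set (Set V)).PairwiseDisjoint
          (fun A => (S ∩ A).toFinset) := by
        intro A hA B hB hAB
        simp only [Finset.coe_erase, Set.mem_diff, Finset.mem_coe] at hA hB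
        refine Finset.disjoint_left.mpr ?_
        intro x hxA hxB
        rw [Set.mem_toFinset] at hxA hxB
        exact Set.disjoint_left.mp (hdisj A hA.1 B hB.1 hAB) hxA.2 hxB.2
      calc ∑ A ∈ P.erase Av, (S ∩ A).ncard
          = ∑ A ∈ P.erase Av, (S ∩ A).toFinset.card := by
            refine Finset.sum_congr rfl fun A _ => ?_
            rw [Set.ncard_eq_toFinset_card']
        _ = ((P.erase Av).biUnion (fun A => (S ∩ A).toFinset)).card :=
            (Finset.card_biUnion hdisj2).symm
        _ ≤ (S \ Av).toFinset.card := by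
            apply Finset.card_le_card
            intro x hx
            obtain ⟨A, hA, hxA⟩ := Finset.mem_biUnion.mp hx
            exact hre A hA hxA
        _ = (S \ Av).ncard := (Set.ncard_eq_toFinset_card' _).symm
        _ = S.ncard - c := by
            have he : S \ Av = S \ (S ∩ Av) := by
              ext x
              simp only [Set.mem_diff, Set.mem_inter_iff, not_and]
              tauto
            rw [hc, he, Set.ncard_diff Set.inter_subset_left]
    have hec : (P.erase Av).card * (2 - c) ≤ S.ncard - c := by
      calc (P.erase Av).card * (2 - c) = ∑ _A ∈ P.erase Av, (2 - c) := by
            rw [Finset.sum_const, smul_eq_mul]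
        _ ≤ ∑ A ∈ P.erase Av, (S ∩ A).ncard := by
            refine Finset.sum_le_sum fun A hA => ?_
            obtain ⟨hAne, hAP⟩ := Finset.mem_erase.mp hA
            have := key A hAP hAne
            omega
        _ ≤ S.ncard - c := hsum
    have hPcard : P.card = (P.erase Av).card + 1 := by
      rw [Finset.card_erase_of_mem hAvP]
      have := Finset.card_pos.mpr ⟨Av, hAvP⟩
      omega
    have hdw : G.degree w ≤ G.maxDegree := G.degree_le_maxDegree w
    rcases (by omega : c = 0 ∨ c = 1) with h0 | h1
    · rw [h0, Nat.sub_zero, Nat.sub_zero] at hec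
      omega
    · rw [h1] at hec
      omega
  · -- Av ≠ Au: P ⊆ {Av, Au}
    have hsub : P ⊆ {Av, Au} := by
      intro A hA
      simp only [Finset.mem_insert, Finset.mem_singleton]
      by_contra h
      push_neg at h
      obtain ⟨B, hB, hBA, hDB⟩ := hco A hA
      obtain ⟨hvm, hum⟩ := ddom_mem G hu hDB
      have hBv : B = Av := by
        rcases hvm with hh | hh
        · exact absurd (huniq v A hA Av hAvP hh hvAv) h.1
        · exact huniq v B hB Av hAvP hh hvAv
      have hBu : B = Au := by
        rcases hum with hh | hh
        · exact absurd (huniq u A hA Au hAuP hh huAu) h.2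
        · exact huniq u B hB Au hAuP hh huAu
      exact hC (hBv ▸ hBu)
    calc P.card ≤ ({Av, Au} : Finset (Set V)).card := Finset.card_le_card hsub
      _ ≤ 2 := Finset.card_insert_le _ _ |>.trans (by simp)
      _ ≤ G.maxDegree + 1 := by omega
end

section
/- For the path P_n with n ≥ 6, the double coalition number satisfies DC(P_n) = 3. -/
open SimpleGraph

variable {V : Type*}

/-! ### Auxiliary lemmas -/

lemma two_le_ncard' {α : Type*} {S : Set α} (hS : S.Finite) {a b : α}
    (hab : a ≠ b) (ha : a ∈ S) (hb : b ∈ S) : 2 ≤ S.ncard :=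
  (Set.one_lt_ncard hS).2 ⟨a, ha, b, hb, hab⟩

/-- Membership in the closed neighborhood of a vertex of a path graph. -/
lemma mem_cnbhd {n : ℕ} {v a : Fin n} :
    a ∈ ((pathGraph n).neighborSet v ∪ {v}) ↔
      (a.val + 1 = v.val ∨ v.val + 1 = a.val ∨ a.val = v.val) := by
  simp only [Set.mem_union, SimpleGraph.mem_neighborSet, pathGraph_adj, Set.mem_singleton_iff,
    Fin.ext_iff]
  tauto

/-- The closed neighborhood of a vertex of a path graph has at most three elements. -/
lemma four_nbhd {n : ℕ} {v a b c d : Fin n}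
    (ha : a ∈ ((pathGraph n).neighborSet v ∪ {v}))
    (hb : b ∈ ((pathGraph n).neighborSet v ∪ {v}))
    (hc : c ∈ ((pathGraph n).neighborSet v ∪ {v}))
    (hd : d ∈ ((pathGraph n).neighborSet v ∪ {v}))
    (hab : a ≠ b) (hac : a ≠ c) (had : a ≠ d) (hbc : b ≠ c) (hbd : b ≠ d) (hcd : c ≠ d) :
    False := by
  rw [mem_cnbhd] at ha hb hc hd
  simp only [ne_eq, Fin.ext_iff] at hab hac had hbc hbd hcd
  omega

/-- Removing a single interior vertex (not too close to either endpoint) from the path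
keeps the remaining vertices a double dominating set. -/
lemma ddom_compl {n : ℕ} (k : ℕ) (hk2 : 2 ≤ k) (hkn : k + 3 ≤ n) :
    DDom (pathGraph n) {x : Fin n | x.val ≠ k} := by
  intro v
  have hv := v.isLt
  obtain ⟨p, q, hp, hq, hpq, hpa, hqa, hpk, hqk⟩ :
      ∃ p q : ℕ, p < n ∧ q < n ∧ p ≠ q ∧
        (p + 1 = v.val ∨ v.val + 1 = p ∨ p = v.val) ∧
        (q + 1 = v.val ∨ v.val + 1 = q ∨ q = v.val) ∧ p ≠ k ∧ q ≠ k := by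
    rcases Nat.lt_trichotomy v.val k with hlt | heq | hgt
    · rcases Nat.eq_zero_or_pos v.val with h0 | h0
      · exact ⟨0, 1, by omega, by omega, by omega, by omega, by omega, by omega, by omega⟩
      · exact ⟨v.val - 1, v.val, by omega, by omega, by omega, by omega, by omega, by omega,
          by omega⟩
    · exact ⟨k - 1, k + 1, by omega, by omega, by omega, by omega, by omega, by omega, by omega⟩
    · rcases Nat.lt_or_ge (v.val + 1) n with h1 | h1
      · exact ⟨v.val, v.val + 1, by omega, by omega, by omega, by omega, by omega, by omega,
          by omega⟩
      · exact ⟨v.val - 1, v.val, by omega, by omega, by omega, by omega, by omega, by omega,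
          by omega⟩
  refine two_le_ncard' (Set.toFinite _) (a := ⟨p, hp⟩) (b := ⟨q, hq⟩) ?_ ?_ ?_
  · simp only [ne_eq, Fin.ext_iff]; exact hpq
  · exact ⟨mem_cnbhd.2 (by simpa using hpa), by simpa using hpk⟩
  · exact ⟨mem_cnbhd.2 (by simpa using hqa), by simpa using hqk⟩

/-- A double dominating set of the path contains both the first and the second vertex. -/
lemma endpoint_mem {n : ℕ} (h : 6 ≤ n) {D : Set (Fin n)} (hD : DDom (pathGraph n) D) :
    (⟨0, by omega⟩ : Fin n) ∈ D ∧ (⟨1, by omega⟩ : Fin n) ∈ D := by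
  have h2 := hD ⟨0, by omega⟩
  have hne01 : (⟨0, by omega⟩ : Fin n) ≠ (⟨1, by omega⟩ : Fin n) := by
    simp [Fin.ext_iff]
  have hN : (pathGraph n).neighborSet (⟨0, by omega⟩ : Fin n) ∪ {(⟨0, by omega⟩ : Fin n)} =
      {(⟨0, by omega⟩ : Fin n), (⟨1, by omega⟩ : Fin n)} := by
    ext a
    rw [mem_cnbhd]
    simp only [Set.mem_insert_iff, Set.mem_singleton_iff, Fin.ext_iff]
    omega
  rw [hN] at h2
  have heq : ({(⟨0, by omega⟩ : Fin n), (⟨1, by omega⟩ : Fin n)} : Set (Fin n)) ∩ D =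
      {(⟨0, by omega⟩ : Fin n), (⟨1, by omega⟩ : Fin n)} := by
    apply Set.eq_of_subset_of_ncard_le Set.inter_subset_left _ (Set.toFinite _)
    rw [Set.ncard_pair hne01]
    exact h2
  constructor
  · exact ((Set.ext_iff.1 heq _).2 (by simp)).2
  · exact ((Set.ext_iff.1 heq _).2 (by simp)).2

/-- Lower bound: a double coalition partition of the path with three parts. -/
lemma dc_lower {n : ℕ} (h : 6 ≤ n) :
    ∃ P : Finset (Set (Fin n)), IsDCPartition (pathGraph n) P ∧ P.card = 3 := by
  classical
  set A : Set (Fin n) := {x | x.val = 2} with hA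
  set B : Set (Fin n) := {x | x.val = 3} with hB
  set C : Set (Fin n) := {x | x.val ≠ 2 ∧ x.val ≠ 3} with hC
  have hmA : (⟨2, by omega⟩ : Fin n) ∈ A := by simp [hA]
  have hmB : (⟨3, by omega⟩ : Fin n) ∈ B := by simp [hB]
  have hmC : (⟨0, by omega⟩ : Fin n) ∈ C := by simp [hC]
  have hAB : A ≠ B := by
    intro hEq; rw [hEq] at hmA; simp [hB] at hmA
  have hAC : A ≠ C := by
    intro hEq; rw [hEq] at hmA; simp [hC] at hmA
  have hBC : B ≠ C := by
    intro hEq; rw [hEq] at hmB; simp [hC] at hmB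
  have hDDAC : DDom (pathGraph n) (A ∪ C) := by
    have hU : A ∪ C = {x : Fin n | x.val ≠ 3} := by
      ext x; simp only [Set.mem_union, hA, hB, hC, Set.mem_setOf_eq]; omega
    rw [hU]; exact ddom_compl 3 (by omega) (by omega)
  have hDDBC : DDom (pathGraph n) (B ∪ C) := by
    have hU : B ∪ C = {x : Fin n | x.val ≠ 2} := by
      ext x; simp only [Set.mem_union, hA, hB, hC, Set.mem_setOf_eq]; omega
    rw [hU]; exact ddom_compl 2 (by omega) (by omega)
  refine ⟨{A, B, C}, ⟨?_, ?_, ?_, ?_, ?_⟩, ?_⟩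
  · intro S hS
    simp only [Finset.mem_insert, Finset.mem_singleton] at hS
    rcases hS with rfl | rfl | rfl
    · exact ⟨_, hmA⟩
    · exact ⟨_, hmB⟩
    · exact ⟨_, hmC⟩
  · intro S hS T hT hne
    simp only [Finset.mem_insert, Finset.mem_singleton] at hS hT
    rw [Set.disjoint_left]
    intro x hx hx'
    rcases hS with rfl | rfl | rfl <;> rcases hT with rfl | rfl | rfl <;>
      simp only [hA, hB, hC, Set.mem_setOf_eq] at hx hx' <;>
      first
        | omega
        | exact absurd rfl hne
  · rw [Finset.sup_insert, Finset.sup_insert, Finset.sup_singleton]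
    ext x
    simp only [id, Set.sup_eq_union, Set.mem_union, hA, hB, hC, Set.mem_setOf_eq, Set.mem_univ,
      iff_true]
    omega
  · intro S hS
    simp only [Finset.mem_insert, Finset.mem_singleton] at hS
    rcases hS with rfl | rfl | rfl
    · intro hDD
      obtain ⟨a, ha, b, hb, hab⟩ := (Set.one_lt_ncard (Set.toFinite _)).1
        (hDD ⟨0, by omega⟩)
      rw [Set.mem_inter_iff, mem_cnbhd] at ha
      simp only [hA, Set.mem_setOf_eq] at ha
      omega
    · intro hDD
      obtain ⟨a, ha, b, hb, hab⟩ := (Set.one_lt_ncard (Set.toFinite _)).1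
        (hDD ⟨0, by omega⟩)
      rw [Set.mem_inter_iff, mem_cnbhd] at ha
      simp only [hB, Set.mem_setOf_eq] at ha
      omega
    · intro hDD
      obtain ⟨a, ha, b, hb, hab⟩ := (Set.one_lt_ncard (Set.toFinite _)).1
        (hDD ⟨2, by omega⟩)
      rw [Set.mem_inter_iff, mem_cnbhd] at ha hb
      simp only [hC, Set.mem_setOf_eq] at ha hb
      simp only [ne_eq, Fin.ext_iff] at hab
      omega
  · intro S hS
    simp only [Finset.mem_insert, Finset.mem_singleton] at hS
    rcases hS with rfl | rfl | rfl
    · exact ⟨C, by simp, hAC.symm, hDDAC⟩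
    · exact ⟨C, by simp, hBC.symm, hDDBC⟩
    · exact ⟨A, by simp, hAC, by rw [Set.union_comm]; exact hDDAC⟩
  · rw [Finset.card_insert_of_notMem (by simp [hAB, hAC]),
      Finset.card_insert_of_notMem (by simp [hBC]), Finset.card_singleton]

/-- Upper bound: a double coalition partition of the path has at most three parts. -/
lemma dc_upper {n : ℕ} (h : 6 ≤ n) {P : Finset (Set (Fin n))}
    (hP : IsDCPartition (pathGraph n) P) : P.card ≤ 3 := by
  classical
  by_contra hcard
  push_neg at hcard
  obtain ⟨hne, hdisj, hsup, hnd, hco⟩ := hP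
  have huniq : ∀ A ∈ P, ∀ B ∈ P, ∀ x : Fin n, x ∈ A → x ∈ B → A = B := by
    intro A hA B hB x hxA hxB
    by_contra hAB
    exact Set.disjoint_left.1 (hdisj A hA B hB hAB) hxA hxB
  have hne2 : ∀ A ∈ P, ∀ B ∈ P, A ≠ B → ∀ {a b : Fin n}, a ∈ A → b ∈ B → a ≠ b := by
    intro A hA B hB hAB a b ha hb he
    exact Set.disjoint_left.1 (hdisj A hA B hB hAB) ha (he ▸ hb)
  have hmem : ∀ v : Fin n, ∃ A ∈ P, v ∈ A := by
    intro v
    have hv : v ∈ P.sup id := by rw [hsup]; trivial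
    rw [Finset.sup_set_eq_biUnion] at hv
    simpa using hv
  obtain ⟨X, hX, hv0X⟩ := hmem ⟨0, by omega⟩
  -- every other part has X as its coalition partner
  have hpart : ∀ C ∈ P, C ≠ X → DDom (pathGraph n) (C ∪ X) := by
    intro C hC hCX
    obtain ⟨B, hB, hBC, hDD⟩ := hco C hC
    have h0 := (endpoint_mem h hDD).1
    have h0C : (⟨0, by omega⟩ : Fin n) ∉ C := fun hh => hCX (huniq C hC X hX _ hh hv0X)
    have h0B : (⟨0, by omega⟩ : Fin n) ∈ B := ((Set.mem_union _ _ _).1 h0).resolve_left h0C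
    have hBX : B = X := huniq B hB X hX _ h0B hv0X
    rw [hBX] at hDD
    exact hDD
  -- X is not double dominating: there is a bad vertex v
  have hXnd := hnd X hX
  simp only [DDom, not_forall, not_le] at hXnd
  obtain ⟨v, hv⟩ := hXnd
  -- three parts different from X
  have hce : 3 ≤ (P.erase X).card := by
    rw [Finset.card_erase_of_mem hX]; omega
  obtain ⟨C1, hC1⟩ := Finset.card_pos.1 (by omega : 0 < (P.erase X).card)
  have hce2 : 2 ≤ ((P.erase X).erase C1).card := by
    rw [Finset.card_erase_of_mem hC1]; omega
  obtain ⟨C2, hC2⟩ := Finset.card_pos.1 (by omega : 0 < ((P.erase X).erase C1).card)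
  have hce3 : 1 ≤ (((P.erase X).erase C1).erase C2).card := by
    rw [Finset.card_erase_of_mem hC2]; omega
  obtain ⟨C3, hC3⟩ := Finset.card_pos.1
    (by omega : 0 < (((P.erase X).erase C1).erase C2).card)
  simp only [Finset.mem_erase] at hC1 hC2 hC3
  obtain ⟨h1X, h1P⟩ := hC1
  obtain ⟨h21, h2X, h2P⟩ := hC2
  obtain ⟨h32, h31, h3X, h3P⟩ := hC3
  -- counting in the closed neighborhood of v
  have key : ∀ C ∈ P, C ≠ X →
      1 ≤ (((pathGraph n).neighborSet v ∪ {v}) ∩ C).ncard ∧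
      2 ≤ (((pathGraph n).neighborSet v ∪ {v}) ∩ C).ncard +
        (((pathGraph n).neighborSet v ∪ {v}) ∩ X).ncard := by
    intro C hC hCX
    have h2 := hpart C hC hCX v
    rw [Set.inter_union_distrib_left] at h2
    have hle := Set.ncard_union_le (((pathGraph n).neighborSet v ∪ {v}) ∩ C)
      (((pathGraph n).neighborSet v ∪ {v}) ∩ X)
    constructor <;> omega
  have k1 := key C1 h1P h1X
  have k2 := key C2 h2P h2X
  have k3 := key C3 h3P h3X
  rcases (by omega : (((pathGraph n).neighborSet v ∪ {v}) ∩ X).ncard = 0 ∨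
      (((pathGraph n).neighborSet v ∪ {v}) ∩ X).ncard = 1) with hx0 | hx1
  · obtain ⟨a, ha, b, hb, hab⟩ := (Set.one_lt_ncard (Set.toFinite _)).1
      (by omega : 1 < (((pathGraph n).neighborSet v ∪ {v}) ∩ C1).ncard)
    obtain ⟨c, hc, d, hd, hcd⟩ := (Set.one_lt_ncard (Set.toFinite _)).1
      (by omega : 1 < (((pathGraph n).neighborSet v ∪ {v}) ∩ C2).ncard)
    exact four_nbhd ha.1 hb.1 hc.1 hd.1 hab
      (hne2 C1 h1P C2 h2P (Ne.symm h21) ha.2 hc.2)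
      (hne2 C1 h1P C2 h2P (Ne.symm h21) ha.2 hd.2)
      (hne2 C1 h1P C2 h2P (Ne.symm h21) hb.2 hc.2)
      (hne2 C1 h1P C2 h2P (Ne.symm h21) hb.2 hd.2) hcd
  · obtain ⟨x, hx⟩ := (Set.ncard_pos (Set.toFinite _)).1
      (by omega : 0 < (((pathGraph n).neighborSet v ∪ {v}) ∩ X).ncard)
    obtain ⟨x1, hx1'⟩ := (Set.ncard_pos (Set.toFinite _)).1
      (by omega : 0 < (((pathGraph n).neighborSet v ∪ {v}) ∩ C1).ncard)
    obtain ⟨x2, hx2'⟩ := (Set.ncard_pos (Set.toFinite _)).1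
      (by omega : 0 < (((pathGraph n).neighborSet v ∪ {v}) ∩ C2).ncard)
    obtain ⟨x3, hx3'⟩ := (Set.ncard_pos (Set.toFinite _)).1
      (by omega : 0 < (((pathGraph n).neighborSet v ∪ {v}) ∩ C3).ncard)
    exact four_nbhd hx.1 hx1'.1 hx2'.1 hx3'.1
      (hne2 X hX C1 h1P (Ne.symm h1X) hx.2 hx1'.2)
      (hne2 X hX C2 h2P (Ne.symm h2X) hx.2 hx2'.2)
      (hne2 X hX C3 h3P (Ne.symm h3X) hx.2 hx3'.2)
      (hne2 C1 h1P C2 h2P (Ne.symm h21) hx1'.2 hx2'.2)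
      (hne2 C1 h1P C3 h3P (Ne.symm h31) hx1'.2 hx3'.2)
      (hne2 C2 h2P C3 h3P (Ne.symm h32) hx2'.2 hx3'.2)

theorem stmt_13 (n : ℕ) (h : 6 ≤ n) :
    DC (pathGraph n) = 3 := by
  obtain ⟨P3, hP3, hc3⟩ := dc_lower h
  have hub : ∀ k ∈ {k | ∃ P : Finset (Set (Fin n)), IsDCPartition (pathGraph n) P ∧ P.card = k},
      k ≤ 3 := by
    rintro k ⟨P, hP, rfl⟩
    exact dc_upper h hP
  apply le_antisymm
  · exact csSup_le ⟨3, P3, hP3, hc3⟩ hub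
  · exact le_csSup ⟨3, hub⟩ ⟨P3, hP3, hc3⟩
end

section
/- For every cycle C_n with n ≥ 3, the double domination number satisfies γ_{×2}(C_n) = ⌈2n/3⌉. -/
open SimpleGraph

variable {V : Type*}

section Aux
variable {m : ℕ}

lemma fin_add_one_ne (d : Fin (m+3)) : d + 1 ≠ d := by
  intro h
  have h1 := congrArg Fin.val h
  rw [Fin.val_add_one] at h1
  split at h1
  · next h0 =>
      have : d.val = m+2 := by rw [h0]; rfl
      omega
  · omega

lemma fin_sub_one_ne (d : Fin (m+3)) : d - 1 ≠ d := by
  intro h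
  have h1 := congrArg Fin.val h
  rw [Fin.coe_sub_one] at h1
  split at h1
  · next h0 => subst h0; simp at h1
  · next h0 =>
      have : d.val ≠ 0 := by intro hh; apply h0; ext; simp [hh]
      omega

lemma fin_add_ne_sub (d : Fin (m+3)) : d + 1 ≠ d - 1 := by
  intro h
  have h1 := congrArg Fin.val h
  rw [Fin.coe_sub_one, Fin.val_add_one] at h1
  split at h1 <;> split at h1
  · next ha hb =>
      have hv : d.val = m + 2 := by rw [ha]; rfl
      have : d.val = 0 := by rw [hb]; rfl
      omega
  · next ha hb =>
      have hv : d.val = m + 2 := by rw [ha]; rfl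
      have : d.val ≠ 0 := by intro hh; apply hb; ext; simp [hh]
      omega
  · next ha hb =>
      have : d.val = 0 := by rw [hb]; rfl
      omega
  · next ha hb =>
      have : d.val ≠ 0 := by intro hh; apply hb; ext; simp [hh]
      omega

lemma closed_nbhd (v : Fin (m+3)) :
    (cycleGraph (m+3)).neighborSet v ∪ {v} = {v - 1, v + 1, v} := by
  rw [cycleGraph_neighborSet (n := m+1) (v := v)]
  ext x
  simp [Set.mem_insert_iff, or_comm, or_assoc, or_left_comm]

lemma dd_lower (D : Set (Fin (m+3))) (hD : DDom (cycleGraph (m+3)) D) :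
    2 * (m+3) ≤ 3 * D.ncard := by
  classical
  set Dt := D.toFinset with hDt
  have hcard : ∀ v : Fin (m+3),
      2 ≤ (({v-1, v+1, v} : Finset (Fin (m+3))) ∩ Dt).card := by
    intro v
    have h := hD v
    rw [closed_nbhd] at h
    rw [Set.ncard_eq_toFinset_card'] at h
    convert h using 2
    ext x
    simp [hDt]
  have key : ∑ v : Fin (m+3), (({v-1, v+1, v} : Finset (Fin (m+3))) ∩ Dt).card
      = 3 * Dt.card := by
    have h1 : ∀ v : Fin (m+3), (({v-1, v+1, v} : Finset (Fin (m+3))) ∩ Dt).card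
        = ∑ d ∈ Dt, if d ∈ ({v-1, v+1, v} : Finset (Fin (m+3))) then 1 else 0 := by
      intro v
      rw [Finset.inter_comm, ← Finset.filter_mem_eq_inter, Finset.card_filter]
    simp_rw [h1]
    rw [Finset.sum_comm]
    have h2 : ∀ d : Fin (m+3),
        ∑ v : Fin (m+3), (if d ∈ ({v-1, v+1, v} : Finset (Fin (m+3))) then 1 else 0)
        = 3 := by
      intro d
      rw [← Finset.card_filter]
      have hfe : (Finset.univ.filter
          (fun v : Fin (m+3) => d ∈ ({v-1, v+1, v} : Finset (Fin (m+3)))))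
          = ({d+1, d-1, d} : Finset (Fin (m+3))) := by
        ext v
        simp only [Finset.mem_filter, Finset.mem_univ, true_and, Finset.mem_insert,
          Finset.mem_singleton]
        constructor
        · rintro (h | h | h)
          · left; rw [h]; simp
          · right; left; rw [h]; simp
          · right; right; rw [h]
        · rintro (h | h | h)
          · left; rw [h]; simp
          · right; left; rw [h]; simp
          · right; right; rw [h]
      rw [hfe]
      rw [Finset.card_insert_of_notMem (by
        simp only [Finset.mem_insert, Finset.mem_singleton]
        push_neg
        exact ⟨fin_add_ne_sub d, fin_add_one_ne d⟩),
        Finset.card_insert_of_notMem (by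
          simp only [Finset.mem_singleton]
          exact fin_sub_one_ne d),
        Finset.card_singleton]
    simp_rw [h2]
    simp [Finset.sum_const, mul_comm]
  have hsum : 2 * (m+3) ≤ ∑ v : Fin (m+3), (({v-1, v+1, v} : Finset (Fin (m+3))) ∩ Dt).card := by
    calc 2 * (m+3) = ∑ _v : Fin (m+3), 2 := by simp [mul_comm]
    _ ≤ _ := Finset.sum_le_sum (fun v _ => hcard v)
  rw [Set.ncard_eq_toFinset_card', ← hDt]
  omega

lemma dd_upper : DDom (cycleGraph (m+3)) {v : Fin (m+3) | v.val % 3 ≠ 2} := by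
  intro v
  rw [closed_nbhd]
  set D : Set (Fin (m+3)) := {v : Fin (m+3) | v.val % 3 ≠ 2} with hDdef
  have hfin : (({v-1, v+1, v} : Set (Fin (m+3))) ∩ D).Finite := Set.toFinite _
  have goal2 : ∀ a b : Fin (m+3), a ∈ ({v-1, v+1, v} : Set (Fin (m+3))) ∩ D →
      b ∈ ({v-1, v+1, v} : Set (Fin (m+3))) ∩ D → a ≠ b →
      2 ≤ (({v-1, v+1, v} : Set (Fin (m+3))) ∩ D).ncard := by
    intro a b ha hb hab
    exact (Set.one_lt_ncard_iff hfin).mpr ⟨a, b, ha, hb, hab⟩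
  have hvadd := Fin.val_add_one v
  have hvsub := Fin.coe_sub_one v
  have hmemsub : (v - 1 : Fin (m+3)) ∈ ({v-1, v+1, v} : Set (Fin (m+3))) := by simp
  have hmemadd : (v + 1 : Fin (m+3)) ∈ ({v-1, v+1, v} : Set (Fin (m+3))) := by simp
  have hmemv : v ∈ ({v-1, v+1, v} : Set (Fin (m+3))) := by simp
  -- facts about values
  have haddval : (v + 1 : Fin (m+3)).val % 3 ≠ 2 ∨ (v + 1 : Fin (m+3)).val % 3 = (v.val + 1) % 3 := by
    rw [hvadd]; split <;> simp
  have hsubval : v = 0 ∨ (v - 1 : Fin (m+3)).val = v.val - 1 := by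
    rw [hvsub]; split
    · left; assumption
    · right; rfl
  have hc3 : v.val % 3 = 0 ∨ v.val % 3 = 1 ∨ v.val % 3 = 2 := by omega
  rcases hc3 with h0 | h1 | h2
  · -- v.val % 3 = 0 : use v and v + 1
    refine goal2 v (v+1) ⟨hmemv, by simpa [hDdef] using by omega⟩
      ⟨hmemadd, ?_⟩ (Ne.symm (fin_add_one_ne v))
    rcases haddval with h | h
    · exact h
    · simp only [hDdef, Set.mem_setOf_eq, h]; omega
  · -- v.val % 3 = 1 : use v and v - 1
    have hvne0 : v ≠ 0 := by
      intro hh; rw [hh] at h1; simp at h1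
    have hval : (v - 1 : Fin (m+3)).val = v.val - 1 := by
      rcases hsubval with h | h
      · exact absurd h hvne0
      · exact h
    refine goal2 v (v-1) ⟨hmemv, by simp [hDdef]; omega⟩
      ⟨hmemsub, ?_⟩ (Ne.symm (fin_sub_one_ne v))
    simp only [hDdef, Set.mem_setOf_eq, hval]; omega
  · -- v.val % 3 = 2 : use v - 1 and v + 1
    have hvne0 : v ≠ 0 := by
      intro hh; rw [hh] at h2; simp at h2
    have hval : (v - 1 : Fin (m+3)).val = v.val - 1 := by
      rcases hsubval with h | h
      · exact absurd h hvne0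
      · exact h
    refine goal2 (v-1) (v+1) ⟨hmemsub, by simp only [hDdef, Set.mem_setOf_eq, hval]; omega⟩
      ⟨hmemadd, ?_⟩ (Ne.symm (fin_add_ne_sub v))
    rcases haddval with h | h
    · exact h
    · simp only [hDdef, Set.mem_setOf_eq, h]; omega

lemma dd_card : ({v : Fin (m+3) | v.val % 3 ≠ 2} : Set (Fin (m+3))).ncard = (2*(m+3)+2)/3 := by
  classical
  rw [Set.ncard_eq_toFinset_card']
  rw [Set.toFinset_setOf]
  have hsplit := Finset.card_filter_add_card_filter_not
    (s := (Finset.univ : Finset (Fin (m+3)))) (p := fun v : Fin (m+3) => v.val % 3 = 2)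
  have hbij : (Finset.univ.filter (fun v : Fin (m+3) => v.val % 3 = 2)).card
      = ((Finset.range (m+3)).filter (fun i => 3 ∣ (i+1))).card := by
    apply Finset.card_bij (fun v _ => v.val)
    · intro a ha
      simp only [Finset.mem_filter, Finset.mem_univ, true_and] at ha
      simp only [Finset.mem_filter, Finset.mem_range]
      exact ⟨a.isLt, by omega⟩
    · intro a _ b _ hab; exact Fin.ext hab
    · intro b hb
      simp only [Finset.mem_filter, Finset.mem_range] at hb
      exact ⟨⟨b, hb.1⟩, by simp only [Finset.mem_filter, Finset.mem_univ, true_and]; omega, rfl⟩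
  rw [Nat.card_multiples] at hbij
  have huniv : (Finset.univ : Finset (Fin (m+3))).card = m + 3 := by simp
  have hfn : (Finset.univ.filter (fun v : Fin (m+3) => ¬ v.val % 3 = 2)).card
      = (Finset.univ.filter (fun v : Fin (m+3) => v.val % 3 ≠ 2)).card := rfl
  omega

end Aux

theorem stmt_14 (n : ℕ) (h : 3 ≤ n) :
    gamma2 (cycleGraph n) = (2 * n + 2) / 3 := by
  obtain ⟨m, rfl⟩ : ∃ m, n = m + 3 := ⟨n - 3, by omega⟩
  apply le_antisymm
  · exact Nat.sInf_le ⟨_, dd_upper, dd_card⟩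
  · have hmem : (2*(m+3)+2)/3 ∈ {k | ∃ D : Set (Fin (m+3)), DDom (cycleGraph (m+3)) D ∧ D.ncard = k} :=
      ⟨_, dd_upper, dd_card⟩
    apply le_csInf ⟨_, hmem⟩
    rintro k ⟨D, hD, rfl⟩
    have := dd_lower D hD
    omega
end

section
/- For every cycle C_n with n ≥ 3, the double coalition number satisfies DC(C_n) = 3. -/
open SimpleGraph

variable {V : Type*}

lemma W_eq (m : ℕ) (v : Fin (m+3)) :
    (cycleGraph (m+3)).neighborSet v ∪ {v} = {v-1, v, v+1} := by
  rw [cycleGraph_neighborSet (n := m+1)]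
  ext x; simp; tauto

lemma fin_one_nz (m : ℕ) : (1 : Fin (m+3)) ≠ 0 := by simp [Fin.ext_iff]

lemma fin_two_nz (m : ℕ) : (2 : Fin (m+3)) ≠ 0 := by
  intro h; have := congrArg Fin.val h; simp [Fin.val_two] at this; rw [Nat.mod_eq_of_lt (by omega)] at this; omega

lemma sub_one_ne (m : ℕ) (v : Fin (m+3)) : v - 1 ≠ v := by
  intro hh; exact fin_one_nz m (by open Fin.CommRing in linear_combination -hh)

lemma add_one_ne (m : ℕ) (v : Fin (m+3)) : v + 1 ≠ v := by
  intro hh; exact fin_one_nz m (by open Fin.CommRing in linear_combination hh)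

lemma sub_ne_add (m : ℕ) (v : Fin (m+3)) : v - 1 ≠ v + 1 := by
  intro hh; exact fin_two_nz m (by open Fin.CommRing in linear_combination -hh)

lemma W_ncard (m : ℕ) (v : Fin (m+3)) :
    ((cycleGraph (m+3)).neighborSet v ∪ {v}).ncard = 3 := by
  rw [W_eq]
  rw [Set.ncard_insert_of_notMem (by simp [sub_one_ne m v, sub_ne_add m v]) (Set.toFinite _),
      Set.ncard_insert_of_notMem (by simp [(add_one_ne m v).symm]) (Set.toFinite _),
      Set.ncard_singleton]

lemma ddom_compl_singleton (m : ℕ) (a : Fin (m+3)) :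
    DDom (cycleGraph (m+3)) ({a}ᶜ) := by
  intro v
  rw [← Set.diff_eq]
  have h1 := Set.ncard_le_ncard_diff_add_ncard ((cycleGraph (m+3)).neighborSet v ∪ {v}) {a} (Set.toFinite _)
  rw [W_ncard, Set.ncard_singleton] at h1
  omega

lemma lower (m : ℕ) : ∃ P : Finset (Set (Fin (m+3))),
    IsDCPartition (cycleGraph (m+3)) P ∧ P.card = 3 := by
  classical
  have h01 : (0 : Fin (m+3)) ≠ 1 := (fin_one_nz m).symm
  set A : Set (Fin (m+3)) := {0} with hA
  set B : Set (Fin (m+3)) := {1} with hB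
  set C : Set (Fin (m+3)) := ({0,1} : Set (Fin (m+3)))ᶜ with hC
  have hAB : A ≠ B := by
    intro hh; exact h01 (by rw [hA, hB] at hh; simpa [Set.singleton_eq_singleton_iff] using hh)
  have h0C : (0 : Fin (m+3)) ∉ C := by simp [hC]
  have h1C : (1 : Fin (m+3)) ∉ C := by simp [hC]
  have hAC : A ≠ C := fun hh => h0C (hh ▸ rfl)
  have hBC : B ≠ C := fun hh => h1C (hh ▸ rfl)
  have hAuC : A ∪ C = ({1} : Set (Fin (m+3)))ᶜ := by
    ext x; simp [hA, hC]
    constructor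
    · rintro (rfl | ⟨-, hx⟩) <;> [exact h01; exact hx]
    · intro hx; by_cases hx0 : x = 0 <;> simp [hx0, hx]
  have hBuC : B ∪ C = ({0} : Set (Fin (m+3)))ᶜ := by
    ext x; simp [hB, hC]
    constructor
    · rintro (rfl | ⟨hx, -⟩) <;> [exact h01.symm; exact hx]
    · intro hx; by_cases hx1 : x = 1 <;> simp [hx1, hx]
  have hndSingle : ∀ a : Fin (m+3), ¬ DDom (cycleGraph (m+3)) {a} := by
    intro a hdd
    have h2 := hdd 0
    have h3 : (((cycleGraph (m+3)).neighborSet 0 ∪ {0}) ∩ {a}).ncard ≤ 1 := by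
      calc _ ≤ ({a} : Set (Fin (m+3))).ncard := Set.ncard_le_ncard Set.inter_subset_right (Set.toFinite _)
        _ = 1 := Set.ncard_singleton a
    omega
  have hndC : ¬ DDom (cycleGraph (m+3)) C := by
    intro hdd
    have h2 := hdd 0
    have hsub : ((cycleGraph (m+3)).neighborSet 0 ∪ {0}) ∩ C ⊆ {(0:Fin (m+3)) - 1} := by
      rw [W_eq]
      rintro x ⟨hx1, hx2⟩
      simp [hC] at hx1 hx2
      rcases hx1 with rfl | rfl | rfl
      · rfl
      · exact absurd rfl hx2.1
      · exact absurd rfl hx2.2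
    have h3 : (((cycleGraph (m+3)).neighborSet 0 ∪ {0}) ∩ C).ncard ≤ 1 := by
      calc _ ≤ ({(0:Fin (m+3)) - 1} : Set (Fin (m+3))).ncard := Set.ncard_le_ncard hsub (Set.toFinite _)
        _ = 1 := Set.ncard_singleton _
    omega
  refine ⟨{A, B, C}, ⟨?_, ?_, ?_, ?_, ?_⟩, ?_⟩
  · intro X hX
    simp at hX
    rcases hX with rfl | rfl | rfl
    · exact ⟨0, rfl⟩
    · exact ⟨1, rfl⟩
    · exact ⟨2, by simp [hC, Fin.ext_iff, Fin.val_two, Nat.mod_eq_of_lt (show 2 < m+3 by omega)]⟩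
  · intro X hX Y hY hne
    simp at hX hY
    have dAB : Disjoint A B := by simp [hA, hB, h01]
    have dAC : Disjoint A C := by
      rw [Set.disjoint_left]; rintro x rfl; exact fun hx => h0C hx
    have dBC : Disjoint B C := by
      rw [Set.disjoint_left]; rintro x rfl; exact fun hx => h1C hx
    rcases hX with rfl | rfl | rfl <;> rcases hY with rfl | rfl | rfl <;>
      first
        | exact absurd rfl hne
        | exact dAB | exact dAB.symm | exact dAC | exact dAC.symm | exact dBC | exact dBC.symm
  · rw [Finset.sup_insert, Finset.sup_insert, Finset.sup_singleton]
    apply Set.eq_univ_of_forall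
    intro x
    by_cases hx0 : x = 0
    · exact Or.inl (by simp [id, hA, hx0])
    · by_cases hx1 : x = 1
      · exact Or.inr (Or.inl (by simp [id, hB, hx1]))
      · exact Or.inr (Or.inr (by simp [id, hC, hx0, hx1]))
  · intro X hX
    simp at hX
    rcases hX with rfl | rfl | rfl
    · exact hndSingle 0
    · exact hndSingle 1
    · exact hndC
  · intro X hX
    simp at hX
    rcases hX with rfl | rfl | rfl
    · exact ⟨C, by simp, hAC.symm, by rw [hAuC]; exact ddom_compl_singleton m 1⟩
    · exact ⟨C, by simp, hBC.symm, by rw [hBuC]; exact ddom_compl_singleton m 0⟩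
    · exact ⟨A, by simp, hAC, by rw [Set.union_comm, hAuC]; exact ddom_compl_singleton m 1⟩
  · rw [Finset.card_insert_of_notMem (by simp [hAB, hAC]),
        Finset.card_insert_of_notMem (by simp [hBC]), Finset.card_singleton]

lemma ncard_inter_union {k : ℕ} (W A B : Set (Fin k)) (h : Disjoint A B) :
    (W ∩ (A ∪ B)).ncard = (W ∩ A).ncard + (W ∩ B).ncard := by
  rw [Set.inter_union_distrib_left]
  exact Set.ncard_union_eq (h.mono inf_le_right inf_le_right) (Set.toFinite _) (Set.toFinite _)

lemma key4 {k : ℕ} (W A B C D : Set (Fin k)) (hAB : Disjoint A B) (hAC : Disjoint A C)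
    (hAD : Disjoint A D) (hBC : Disjoint B C) (hBD : Disjoint B D) (hCD : Disjoint C D) :
    (W ∩ A).ncard + (W ∩ B).ncard + (W ∩ C).ncard + (W ∩ D).ncard ≤ W.ncard := by
  have h1 : Disjoint (A ∪ B) C := hAC.union_left hBC
  have h2 : Disjoint (A ∪ B ∪ C) D := (hAD.union_left hBD).union_left hCD
  calc (W ∩ A).ncard + (W ∩ B).ncard + (W ∩ C).ncard + (W ∩ D).ncard
      = (W ∩ (A ∪ B)).ncard + (W ∩ C).ncard + (W ∩ D).ncard := by
        rw [ncard_inter_union W A B hAB]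
    _ = (W ∩ (A ∪ B ∪ C)).ncard + (W ∩ D).ncard := by rw [ncard_inter_union W _ C h1]
    _ = (W ∩ (A ∪ B ∪ C ∪ D)).ncard := by rw [ncard_inter_union W _ D h2]
    _ ≤ W.ncard := Set.ncard_le_ncard Set.inter_subset_left (Set.toFinite _)

lemma DC_upper (m : ℕ) (P : Finset (Set (Fin (m+3)))) (hP : IsDCPartition (cycleGraph (m+3)) P) :
    P.card ≤ 3 := by
  classical
  by_contra hc
  push_neg at hc
  obtain ⟨hne, hdisj, hcov, hnd, hco⟩ := hP
  set G := cycleGraph (m+3) with hG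
  have hW3 : ∀ v, ((G.neighborSet v ∪ {v}) : Set (Fin (m+3))).ncard = 3 := fun v => W_ncard m v
  let Sp : Set (Fin (m+3)) → Prop := fun C => ∀ v, ((G.neighborSet v ∪ {v}) ∩ C).ncard ≤ 1
  -- deficiency: every part has a bad vertex
  have hdef : ∀ A ∈ P, ∃ w, ((G.neighborSet w ∪ {w}) ∩ A).ncard ≤ 1 := by
    intro A hA
    have := hnd A hA
    rw [DDom] at this
    push_neg at this
    obtain ⟨w, hw⟩ := this
    exact ⟨w, by omega⟩
  -- S1 : parts outside a double-dominating coalition are sparse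
  have S1 : ∀ A ∈ P, ∀ B ∈ P, ∀ C ∈ P, C ≠ A → C ≠ B → DDom G (A ∪ B) → Sp C := by
    intro A hA B hB C hC hCA hCB hDD v
    have hd : Disjoint C (A ∪ B) := (hdisj C hC A hA hCA).union_right (hdisj C hC B hB hCB)
    have e1 := ncard_inter_union ((G.neighborSet v ∪ {v})) C (A ∪ B) hd
    have e2 : ((G.neighborSet v ∪ {v}) ∩ (C ∪ (A ∪ B))).ncard ≤ 3 :=
      le_trans (Set.ncard_le_ncard Set.inter_subset_left (Set.toFinite _)) (le_of_eq (hW3 v))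
    have h2 : 2 ≤ ((G.neighborSet v ∪ {v}) ∩ (A ∪ B)).ncard := hDD v
    omega
  -- S2 : all parts except possibly one are sparse
  have S2 : ∃ A₀, ∀ C ∈ P, C ≠ A₀ → Sp C := by
    by_cases hex : ∃ A ∈ P, ¬ Sp A
    · obtain ⟨A₀, hA₀, hA₀ns⟩ := hex
      refine ⟨A₀, ?_⟩
      intro C hC hCA
      by_contra hCns
      have h1 : 1 < (P.erase A₀).card :=
        lt_of_lt_of_le (by omega) (Finset.pred_card_le_card_erase)
      obtain ⟨E, hE', hEC⟩ := Finset.exists_mem_ne h1 C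
      obtain ⟨hEA, hE⟩ := Finset.mem_erase.mp hE'
      obtain ⟨F, hF, hFE, hDD⟩ := hco E hE
      by_cases hFA : F = A₀
      · exact hCns (S1 E hE F hF C hC hEC.symm (fun hh => hCA (hh.trans hFA)) hDD)
      · by_cases hFC : F = C
        · exact hA₀ns (S1 E hE F hF A₀ hA₀ (Ne.symm hEA) (fun hh => hCA ((hFC ▸ hh).symm ▸ rfl)) hDD)
        · exact hA₀ns (S1 E hE F hF A₀ hA₀ (Ne.symm hEA) (fun hh => hFA hh.symm) hDD)
    · push_neg at hex
      exact ⟨∅, fun C hC _ => hex C hC⟩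
  obtain ⟨A₀, hSpAll⟩ := S2
  -- three distinct sparse parts
  have h2lt : 2 < (P.erase A₀).card :=
    lt_of_lt_of_le (by omega) (Finset.pred_card_le_card_erase)
  obtain ⟨C1, C2, C3, hC1', hC2', hC3', h12, h13, h23⟩ := Finset.two_lt_card_iff.mp h2lt
  obtain ⟨hC1A, hC1⟩ := Finset.mem_erase.mp hC1'
  obtain ⟨hC2A, hC2⟩ := Finset.mem_erase.mp hC2'
  obtain ⟨hC3A, hC3⟩ := Finset.mem_erase.mp hC3'
  have sp1 : Sp C1 := hSpAll C1 hC1 hC1A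
  have sp2 : Sp C2 := hSpAll C2 hC2 hC2A
  have sp3 : Sp C3 := hSpAll C3 hC3 hC3A
  obtain ⟨D1, hD1, hD1ne, hDD1⟩ := hco C1 hC1
  obtain ⟨D2, hD2, hD2ne, hDD2⟩ := hco C2 hC2
  obtain ⟨D3, hD3, hD3ne, hDD3⟩ := hco C3 hC3
  have dom : ∀ (C D : Set (Fin (m+3))), C ∈ P → D ∈ P → D ≠ C → Sp C → DDom G (C ∪ D) →
      ∀ v, 1 ≤ ((G.neighborSet v ∪ {v}) ∩ D).ncard := by
    intro C D hCm hDm hne' hsp hDD v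
    have e1 := ncard_inter_union ((G.neighborSet v ∪ {v})) C D (hdisj C hCm D hDm (Ne.symm hne'))
    have h2 : 2 ≤ ((G.neighborSet v ∪ {v}) ∩ (C ∪ D)).ncard := hDD v
    have := hsp v
    omega
  -- main contradiction from a shared partner
  have final : ∀ Pp ∈ P, ∀ X ∈ P, ∀ Y ∈ P, X ≠ Y → X ≠ Pp → Y ≠ Pp → Sp X → Sp Y →
      DDom G (X ∪ Pp) → DDom G (Y ∪ Pp) → False := by
    intro Pp hPp X hX Y hY hXY hXP hYP spX spY dX dY
    obtain ⟨w, hw⟩ := hdef Pp hPp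
    have eX := ncard_inter_union ((G.neighborSet w ∪ {w})) X Pp (hdisj X hX Pp hPp hXP)
    have eY := ncard_inter_union ((G.neighborSet w ∪ {w})) Y Pp (hdisj Y hY Pp hPp hYP)
    have hdX : 2 ≤ ((G.neighborSet w ∪ {w}) ∩ (X ∪ Pp)).ncard := dX w
    have hdY : 2 ≤ ((G.neighborSet w ∪ {w}) ∩ (Y ∪ Pp)).ncard := dY w
    have sX := spX w
    have sY := spY w
    -- find a fourth part E
    have hcard3 : 0 < (((P.erase Pp).erase X).erase Y).card := by
      have e1 := Finset.pred_card_le_card_erase (s := P) (a := Pp)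
      have e2 := Finset.pred_card_le_card_erase (s := P.erase Pp) (a := X)
      have e3 := Finset.pred_card_le_card_erase (s := (P.erase Pp).erase X) (a := Y)
      omega
    obtain ⟨E, hE'⟩ := Finset.card_pos.mp hcard3
    obtain ⟨hEY, hE''⟩ := Finset.mem_erase.mp hE'
    obtain ⟨hEX, hE'''⟩ := Finset.mem_erase.mp hE''
    obtain ⟨hEP, hE⟩ := Finset.mem_erase.mp hE'''
    obtain ⟨F, hF, hFE, hDDF⟩ := hco E hE
    have eEF := ncard_inter_union ((G.neighborSet w ∪ {w})) E F (hdisj E hE F hF (Ne.symm hFE))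
    have hdEF : 2 ≤ ((G.neighborSet w ∪ {w}) ∩ (E ∪ F)).ncard := hDDF w
    have hk := key4 ((G.neighborSet w ∪ {w})) Pp X Y E (hdisj Pp hPp X hX (Ne.symm hXP))
      (hdisj Pp hPp Y hY (Ne.symm hYP)) (hdisj Pp hPp E hE (Ne.symm hEP))
      (hdisj X hX Y hY hXY) (hdisj X hX E hE (Ne.symm hEX)) (hdisj Y hY E hE (Ne.symm hEY))
    rw [hW3 w] at hk
    have hF1 : ((G.neighborSet w ∪ {w}) ∩ F).ncard ≤ 1 := by
      by_cases hFP : F = Pp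
      · rw [hFP]; omega
      · by_cases hFX : F = X
        · rw [hFX]; omega
        · by_cases hFY : F = Y
          · rw [hFY]; omega
          · have hk2 := key4 ((G.neighborSet w ∪ {w})) Pp X Y F (hdisj Pp hPp X hX (Ne.symm hXP))
              (hdisj Pp hPp Y hY (Ne.symm hYP)) (hdisj Pp hPp F hF (Ne.symm hFP))
              (hdisj X hX Y hY hXY) (hdisj X hX F hF (Ne.symm hFX)) (hdisj Y hY F hF (Ne.symm hFY))
            rw [hW3 w] at hk2
            omega
    omega
  -- pigeonhole on partners
  by_cases e12 : D1 = D2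
  · exact final D1 hD1 C1 hC1 C2 hC2 h12 (Ne.symm hD1ne) (fun hh => hD2ne (e12 ▸ hh).symm) sp1 sp2
      hDD1 (e12 ▸ hDD2)
  · by_cases e13 : D1 = D3
    · exact final D1 hD1 C1 hC1 C3 hC3 h13 (Ne.symm hD1ne) (fun hh => hD3ne (e13 ▸ hh).symm) sp1 sp3
        hDD1 (e13 ▸ hDD3)
    · by_cases e23 : D2 = D3
      · exact final D2 hD2 C2 hC2 C3 hC3 h23 (Ne.symm hD2ne) (fun hh => hD3ne (e23 ▸ hh).symm)
          sp2 sp3 hDD2 (e23 ▸ hDD3)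
      · -- D1, D2, D3 distinct dominating parts; a fourth part E gives contradiction
        have dom1 := dom C1 D1 hC1 hD1 hD1ne sp1 hDD1
        have dom2 := dom C2 D2 hC2 hD2 hD2ne sp2 hDD2
        have dom3 := dom C3 D3 hC3 hD3 hD3ne sp3 hDD3
        have hcard3 : 0 < (((P.erase D1).erase D2).erase D3).card := by
          have e1 := Finset.pred_card_le_card_erase (s := P) (a := D1)
          have e2 := Finset.pred_card_le_card_erase (s := P.erase D1) (a := D2)
          have e3 := Finset.pred_card_le_card_erase (s := (P.erase D1).erase D2) (a := D3)
          omega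
        obtain ⟨E, hE'⟩ := Finset.card_pos.mp hcard3
        obtain ⟨hE3, hE''⟩ := Finset.mem_erase.mp hE'
        obtain ⟨hE2, hE'''⟩ := Finset.mem_erase.mp hE''
        obtain ⟨hE1, hE⟩ := Finset.mem_erase.mp hE'''
        obtain ⟨e, he⟩ := hne E hE
        have hk := key4 ((G.neighborSet e ∪ {e})) D1 D2 D3 E (hdisj D1 hD1 D2 hD2 e12) (hdisj D1 hD1 D3 hD3 e13)
          (hdisj D1 hD1 E hE (Ne.symm hE1)) (hdisj D2 hD2 D3 hD3 e23)
          (hdisj D2 hD2 E hE (Ne.symm hE2)) (hdisj D3 hD3 E hE (Ne.symm hE3))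
        rw [hW3 e] at hk
        have hEe : 1 ≤ ((G.neighborSet e ∪ {e}) ∩ E).ncard := by
          have : e ∈ (G.neighborSet e ∪ {e}) ∩ E := ⟨Or.inr rfl, he⟩
          have := (Set.ncard_pos (Set.toFinite _)).mpr ⟨e, this⟩
          omega
        have := dom1 e
        have := dom2 e
        have := dom3 e
        omega

theorem stmt_15 (n : ℕ) (h : 3 ≤ n) :
    DC (cycleGraph n) = 3 := by
  obtain ⟨m, rfl⟩ : ∃ m, n = m + 3 := ⟨n - 3, by omega⟩
  obtain ⟨P₃, hP₃, hc₃⟩ := lower m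
  have h3S : 3 ∈ {k | ∃ P : Finset (Set (Fin (m+3))),
      IsDCPartition (cycleGraph (m+3)) P ∧ P.card = k} := ⟨P₃, hP₃, hc₃⟩
  have hub : ∀ k ∈ {k | ∃ P : Finset (Set (Fin (m+3))),
      IsDCPartition (cycleGraph (m+3)) P ∧ P.card = k}, k ≤ 3 := by
    rintro k ⟨P, hP, rfl⟩
    exact DC_upper m P hP
  exact le_antisymm (csSup_le ⟨3, h3S⟩ hub) (le_csSup ⟨3, hub⟩ h3S)
end
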